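/- arXiv:1008.4949 — 4 statements merged into one kernel-verified Lean document; each statement's English description precedes it below -/
import Mathlib

section
/- In the diagonal setting and flow setting, for every u ∈ 𝒜 and every n ≥ 0, the Bochner integral ∫_{−∞}^0 e^{A s} Q_n F(Φ_s u) ds converges in D(A^α) and Q_n u = ∫_{−∞}^0 e^{A s} Q_n F(Φ_s u) ds, where for s ≤ 0 one sets e^{A s} Q_n v = Σ_{j>n} e^{λ_j s} ⟨v,w_j⟩ w_j. -/
open scoped RealInnerProductSpace
open MeasureTheory

noncomputable section

variable {H : Type*} [NormedAddCommGroup H] [InnerProductSpace ℝ H]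

/-- `A^α u = ∑_j λ_j^α ⟨u, w_j⟩ w_j` (fractional power of the diagonal operator). -/
def Apow (w : ℕ → H) (l : ℕ → ℝ) (α : ℝ) (u : H) : H :=
  ∑' j : ℕ, (l j ^ α * ⟪u, w j⟫) • w j

/-- The domain `D(A^α)`. -/
def Dom (w : ℕ → H) (l : ℕ → ℝ) (α : ℝ) : Set H :=
  {u | Summable fun j : ℕ => l j ^ (2 * α) * ⟪u, w j⟫ ^ 2}

/-- `P_n u = ∑_{j=1}^n ⟨u, w_j⟩ w_j` (here `w` is indexed from `0`, so we sum over `j < n`). -/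
def Pproj (w : ℕ → H) (n : ℕ) (u : H) : H :=
  ∑ j ∈ Finset.range n, ⟪u, w j⟫ • w j

/-- `Q_n u = u - P_n u`. -/
def Qproj (w : ℕ → H) (n : ℕ) (u : H) : H := u - Pproj w n u

/-- `e^{-At} u = ∑_j e^{-λ_j t} ⟨u, w_j⟩ w_j`. -/
def heat (w : ℕ → H) (l : ℕ → ℝ) (t : ℝ) (u : H) : H :=
  ∑' j : ℕ, (Real.exp (-(l j) * t) * ⟪u, w j⟫) • w j

/-- For `s ≤ 0`, `e^{As} Q_n v = ∑_{j > n} e^{λ_j s} ⟨v, w_j⟩ w_j`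
(with `0`-based indexing this is the sum over `j ≥ n`). -/
def heatQ (w : ℕ → H) (l : ℕ → ℝ) (n : ℕ) (s : ℝ) (v : H) : H :=
  ∑' j : ℕ, (if n ≤ j then Real.exp (l j * s) * ⟪v, w j⟫ else 0) • w j

/-!
All operators involved are diagonal in `w`. For `s < 0` the multipliers of `e^{As} Q_n` are at
most `e^{λ_n s}`, and those of `A^α e^{As} Q_n` at most `2 (-s)^{-α} e^{λ_n s / 2}`, because
`y^α ≤ 2 e^{y/2}` for `0 ≤ α ≤ 1`. As `F` is bounded on `𝒜`, both integrands are dominated by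
functions integrable on `(-∞, 0]`, the second one because `α < 1`. Applying `Q_n` to the
variation-of-constants formula on `[-T, 0]` gives
`Q_n u = e^{-AT} Q_n Φ_{-T} u + ∫_{-T}^0 e^{As} Q_n F(Φ_s u) ds`, whose first term is at most
`e^{-λ_n T} sup_{v ∈ 𝒜} ‖v‖`; letting `T → ∞` gives the identity in `H`. The identity in
`D(A^α)` follows coefficientwise, since `A^α` commutes with Bochner integrals there.
-/

open Set Filter Topology

namespace Orthonormal

variable {w : ℕ → H}

theorem summable_sq_inner (hw : Orthonormal ℝ w) (v : H) :
    Summable fun j => ⟪v, w j⟫ ^ 2 := by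
  simpa [Real.norm_eq_abs, sq_abs, real_inner_comm] using hw.inner_products_summable (x := v)

theorem tsum_sq_inner_le (hw : Orthonormal ℝ w) (v : H) : ∑' j, ⟪v, w j⟫ ^ 2 ≤ ‖v‖ ^ 2 := by
  simpa [Real.norm_eq_abs, sq_abs, real_inner_comm] using hw.tsum_inner_products_le (x := v)

theorem summable_smul_of_summable_sq [CompleteSpace H] (hw : Orthonormal ℝ w) {a : ℕ → ℝ}
    (ha : Summable fun j => a j ^ 2) : Summable fun j => a j • w j := by
  simpa using (hw.orthogonalFamily.summable_iff_norm_sq_summable a).2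
    (by simpa [Real.norm_eq_abs, sq_abs] using ha)

theorem inner_tsum_smul (hw : Orthonormal ℝ w) {a : ℕ → ℝ} (ha : Summable fun j => a j • w j)
    (k : ℕ) : ⟪∑' j, a j • w j, w k⟫ = a k := by
  rw [real_inner_comm, ← innerSL_apply_apply ℝ, (innerSL ℝ (w k)).map_tsum ha,
    tsum_eq_single k fun j hj => ?_]
  · simp [hw.1 k]
  · simp [hw.2 (Ne.symm hj)]

theorem norm_sq_tsum_smul [CompleteSpace H] (hw : Orthonormal ℝ w) {a : ℕ → ℝ}
    (ha : Summable fun j => a j ^ 2) : ‖∑' j, a j • w j‖ ^ 2 = ∑' j, a j ^ 2 := by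
  have hs := hw.summable_smul_of_summable_sq ha
  rw [← real_inner_self_eq_norm_sq, ← innerSL_apply_apply ℝ, (innerSL ℝ _).map_tsum hs]
  simp only [innerSL_apply_apply, real_inner_smul_right, hw.inner_tsum_smul hs, sq]

variable [CompleteSpace H]

theorem hasSum_inner_smul (hw : Orthonormal ℝ w)
    (hspan : ⊤ ≤ (Submodule.span ℝ (range w)).topologicalClosure) (x : H) :
    HasSum (fun j => ⟪x, w j⟫ • w j) x := by
  simpa [HilbertBasis.coe_mk, HilbertBasis.repr_apply_apply, real_inner_comm] using
    (HilbertBasis.mk hw hspan).hasSum_repr x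

theorem ext_inner (hw : Orthonormal ℝ w)
    (hspan : ⊤ ≤ (Submodule.span ℝ (range w)).topologicalClosure) {x y : H}
    (h : ∀ k, ⟪x, w k⟫ = ⟪y, w k⟫) : x = y := by
  have hx := hw.hasSum_inner_smul hspan x
  simp_rw [h] at hx
  exact hx.unique (hw.hasSum_inner_smul hspan y)

theorem aestronglyMeasurable_of_inner_eq_mul (hw : Orthonormal ℝ w)
    (hspan : ⊤ ≤ (Submodule.span ℝ (range w)).topologicalClosure) {X : Type*}
    [MeasurableSpace X] {μ : Measure X} {f g : X → H} (hg : AEStronglyMeasurable g μ)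
    (c : ℕ → ℝ) (hfg : ∀ j, ∀ᵐ x ∂μ, ⟪f x, w j⟫ = c j * ⟪g x, w j⟫) :
    AEStronglyMeasurable f μ := by
  have hcoeff (j : ℕ) : AEStronglyMeasurable (fun x => ⟪f x, w j⟫) μ := by
    refine (AEStronglyMeasurable.const_mul ?_ (c j)).congr ((hfg j).mono fun _ hx => hx.symm)
    exact (((innerSL ℝ (w j)).continuous.comp_aestronglyMeasurable hg)).congr
      (ae_of_all _ fun x => real_inner_comm _ _)
  refine aestronglyMeasurable_of_tendsto_ae atTop
    (f := fun N x => ∑ j ∈ Finset.range N, ⟪f x, w j⟫ • w j)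
    (fun N => Finset.aestronglyMeasurable_fun_sum _ fun j _ => (hcoeff j).smul_const _)
    (ae_of_all _ fun x => (hw.hasSum_inner_smul hspan (f x)).tendsto_sum_nat)

end Orthonormal

def diagMul (w : ℕ → H) (m : ℕ → ℝ) (v : H) : H :=
  ∑' j, (m j * ⟪v, w j⟫) • w j

section DiagonalMultiplier

variable {w : ℕ → H} {m : ℕ → ℝ} {c : ℝ}

theorem sq_mul_le_of_abs_le {m c a : ℝ} (hm : |m| ≤ c) : (m * a) ^ 2 ≤ c ^ 2 * a ^ 2 := by
  rw [mul_pow, ← sq_abs m]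
  gcongr

theorem summable_sq_mul_inner (hw : Orthonormal ℝ w) (hm : ∀ j, |m j| ≤ c) (v : H) :
    Summable fun j => (m j * ⟪v, w j⟫) ^ 2 :=
  ((hw.summable_sq_inner v).mul_left (c ^ 2)).of_nonneg_of_le (fun _ => sq_nonneg _)
    fun j => sq_mul_le_of_abs_le (hm j)

theorem inner_diagMul [CompleteSpace H] (hw : Orthonormal ℝ w) {v : H}
    (hmv : Summable fun j => (m j * ⟪v, w j⟫) ^ 2) (k : ℕ) :
    ⟪diagMul w m v, w k⟫ = m k * ⟪v, w k⟫ :=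
  hw.inner_tsum_smul (hw.summable_smul_of_summable_sq hmv) k

theorem norm_diagMul_le [CompleteSpace H] (hw : Orthonormal ℝ w) (hm : ∀ j, |m j| ≤ c)
    (v : H) : ‖diagMul w m v‖ ≤ c * ‖v‖ := by
  have hc : 0 ≤ c := (abs_nonneg _).trans (hm 0)
  have hsq : ‖diagMul w m v‖ ^ 2 ≤ (c * ‖v‖) ^ 2 :=
    calc ‖diagMul w m v‖ ^ 2 = ∑' j, (m j * ⟪v, w j⟫) ^ 2 :=
          hw.norm_sq_tsum_smul (summable_sq_mul_inner hw hm v)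
      _ ≤ ∑' j, c ^ 2 * ⟪v, w j⟫ ^ 2 :=
          (summable_sq_mul_inner hw hm v).tsum_le_tsum (fun j => sq_mul_le_of_abs_le (hm j))
            ((hw.summable_sq_inner v).mul_left _)
      _ ≤ (c * ‖v‖) ^ 2 := by
          rw [tsum_mul_left, mul_pow]
          gcongr
          exact hw.tsum_sq_inner_le v
  exact (pow_le_pow_iff_left₀ (norm_nonneg _) (by positivity) two_ne_zero).1 hsq

theorem diagMul_diagMul [CompleteSpace H] (hw : Orthonormal ℝ w) {m' : ℕ → ℝ}
    (hm' : ∀ j, |m' j| ≤ c) (m : ℕ → ℝ) (v : H) :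
    diagMul w m (diagMul w m' v) = diagMul w (fun j => m j * m' j) v := by
  conv_rhs => rw [diagMul]
  rw [diagMul]
  simp only [inner_diagMul hw (summable_sq_mul_inner hw hm' v), mul_assoc]

theorem diagMul_sub [CompleteSpace H] (hw : Orthonormal ℝ w) {x y : H}
    (hx : Summable fun j => (m j * ⟪x, w j⟫) ^ 2)
    (hy : Summable fun j => (m j * ⟪y, w j⟫) ^ 2) :
    diagMul w m (x - y) = diagMul w m x - diagMul w m y := by
  simp only [diagMul, inner_sub_left, mul_sub, sub_smul]
  exact (hw.summable_smul_of_summable_sq hx).tsum_sub (hw.summable_smul_of_summable_sq hy)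

end DiagonalMultiplier

theorem rpow_le_two_mul_exp_half {y β : ℝ} (hy : 0 ≤ y) (hβ0 : 0 ≤ β) (hβ1 : β ≤ 1) :
    y ^ β ≤ 2 * Real.exp (y / 2) := by
  have hle : y ^ β ≤ 1 + y := by
    rcases le_total y 1 with h | h
    · linarith [Real.rpow_le_one hy h hβ0]
    · have := Real.rpow_le_rpow_of_exponent_le h hβ1
      rw [Real.rpow_one] at this
      linarith
  linarith [Real.add_one_le_exp (y / 2)]

section Diagonal

variable {w : ℕ → H} {l : ℕ → ℝ} {α s : ℝ} {n : ℕ}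

theorem Apow_eq_diagMul : Apow w l α = diagMul w fun j => l j ^ α := rfl

theorem heatQ_eq_diagMul :
    heatQ w l n s = diagMul w fun j => if n ≤ j then Real.exp (l j * s) else 0 := by
  funext v
  simp only [heatQ, diagMul, ite_mul, zero_mul]

theorem mem_Dom_iff (hl : ∀ j, 0 ≤ l j) {x : H} :
    x ∈ Dom w l α ↔ Summable fun j => (l j ^ α * ⟪x, w j⟫) ^ 2 := by
  have hsq (j : ℕ) : (l j ^ α) ^ 2 = l j ^ (2 * α) := by
    rw [← Real.rpow_natCast, ← Real.rpow_mul (hl j), Nat.cast_ofNat, mul_comm]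
  simp only [Dom, mem_ofPred_eq, mul_pow, hsq]

theorem inner_Apow [CompleteSpace H] (hw : Orthonormal ℝ w) (hl : ∀ j, 0 ≤ l j) {x : H}
    (hx : x ∈ Dom w l α) (k : ℕ) : ⟪Apow w l α x, w k⟫ = l k ^ α * ⟪x, w k⟫ :=
  inner_diagMul hw ((mem_Dom_iff hl).1 hx) k

theorem Apow_sub [CompleteSpace H] (hw : Orthonormal ℝ w) (hl : ∀ j, 0 ≤ l j) {x y : H}
    (hx : x ∈ Dom w l α) (hy : y ∈ Dom w l α) :
    Apow w l α (x - y) = Apow w l α x - Apow w l α y :=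
  diagMul_sub hw ((mem_Dom_iff hl).1 hx) ((mem_Dom_iff hl).1 hy)

theorem inner_heat [CompleteSpace H] (hw : Orthonormal ℝ w) (hl : ∀ j, 0 ≤ l j) {t : ℝ}
    (ht : 0 ≤ t) (v : H) (k : ℕ) :
    ⟪heat w l t v, w k⟫ = Real.exp (-(l k) * t) * ⟪v, w k⟫ := by
  refine inner_diagMul hw (summable_sq_mul_inner hw (c := 1) (fun j => ?_) v) k
  rw [abs_of_pos (Real.exp_pos _), Real.exp_le_one_iff]
  nlinarith [hl j]

theorem abs_heatQ_symbol_le_one (hl : ∀ j, 0 ≤ l j) (hs : s ≤ 0) (j : ℕ) :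
    |if n ≤ j then Real.exp (l j * s) else 0| ≤ 1 := by
  split_ifs
  · rw [abs_of_pos (Real.exp_pos _), Real.exp_le_one_iff]
    exact mul_nonpos_of_nonneg_of_nonpos (hl j) hs
  · simp

theorem abs_heatQ_symbol_le (hmono : Monotone l) (hs : s ≤ 0) (j : ℕ) :
    |if n ≤ j then Real.exp (l j * s) else 0| ≤ Real.exp (l n * s) := by
  split_ifs with h
  · rw [abs_of_pos (Real.exp_pos _), Real.exp_le_exp]
    exact mul_le_mul_of_nonpos_right (hmono h) hs
  · simpa using (Real.exp_pos _).le

/-- Splitting `e^{λ s} = e^{λ s / 2} e^{λ s / 2}`, one half absorbs `λ^α` at the price of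
`(-s)^{-α}`, the other gives decay as `s → -∞`. -/
theorem abs_rpow_mul_heatQ_symbol_le (hmono : Monotone l) (hl : ∀ j, 0 ≤ l j) (hα0 : 0 ≤ α)
    (hα1 : α ≤ 1) (hs : s < 0) (j : ℕ) :
    |l j ^ α * if n ≤ j then Real.exp (l j * s) else 0|
      ≤ 2 * (-s) ^ (-α) * Real.exp (l n * s / 2) := by
  have ht : 0 < -s := neg_pos.2 hs
  have hbound : 0 ≤ 2 * (-s) ^ (-α) * Real.exp (l n * s / 2) := by
    have := Real.rpow_nonneg ht.le (-α)
    positivity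
  split_ifs with h
  · have hy : 0 ≤ l j * -s := mul_nonneg (hl j) ht.le
    have hsplit : l j ^ α = (l j * -s) ^ α * (-s) ^ (-α) := by
      rw [Real.mul_rpow (hl j) ht.le, mul_assoc, ← Real.rpow_add ht, add_neg_cancel,
        Real.rpow_zero, mul_one]
    have hexp : Real.exp (l j * -s / 2) * Real.exp (l j * s) = Real.exp (l j * s / 2) := by
      rw [← Real.exp_add]
      ring_nf
    have hdecay : Real.exp (l j * s / 2) ≤ Real.exp (l n * s / 2) :=
      Real.exp_le_exp.2 (by linarith [mul_le_mul_of_nonpos_right (hmono h) hs.le])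
    have hrpow := Real.rpow_nonneg ht.le (-α)
    rw [abs_of_nonneg (mul_nonneg (Real.rpow_nonneg (hl j) _) (Real.exp_pos _).le), hsplit]
    calc (l j * -s) ^ α * (-s) ^ (-α) * Real.exp (l j * s)
        ≤ 2 * Real.exp (l j * -s / 2) * (-s) ^ (-α) * Real.exp (l j * s) := by
          gcongr
          exact rpow_le_two_mul_exp_half hy hα0 hα1
      _ = 2 * (-s) ^ (-α) * Real.exp (l j * s / 2) := by
          rw [← hexp]
          ring
      _ ≤ 2 * (-s) ^ (-α) * Real.exp (l n * s / 2) := by gcongr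
  · simpa using hbound

variable [CompleteSpace H]

theorem inner_heatQ (hw : Orthonormal ℝ w) (hl : ∀ j, 0 ≤ l j) (hs : s ≤ 0) (v : H) (k : ℕ) :
    ⟪heatQ w l n s v, w k⟫ = (if n ≤ k then Real.exp (l k * s) else 0) * ⟪v, w k⟫ := by
  rw [heatQ_eq_diagMul]
  exact inner_diagMul hw (summable_sq_mul_inner hw (abs_heatQ_symbol_le_one hl hs) v) k

theorem norm_heatQ_le (hw : Orthonormal ℝ w) (hmono : Monotone l) (hs : s ≤ 0) (v : H) :
    ‖heatQ w l n s v‖ ≤ Real.exp (l n * s) * ‖v‖ := by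
  rw [heatQ_eq_diagMul]
  exact norm_diagMul_le hw (abs_heatQ_symbol_le hmono hs) v

theorem Apow_heatQ (hw : Orthonormal ℝ w) (hl : ∀ j, 0 ≤ l j) (hs : s ≤ 0) (v : H) :
    Apow w l α (heatQ w l n s v)
      = diagMul w (fun j => l j ^ α * if n ≤ j then Real.exp (l j * s) else 0) v := by
  rw [Apow_eq_diagMul, heatQ_eq_diagMul, diagMul_diagMul hw (abs_heatQ_symbol_le_one hl hs)]

theorem norm_Apow_heatQ_le (hw : Orthonormal ℝ w) (hmono : Monotone l) (hl : ∀ j, 0 ≤ l j)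
    (hα0 : 0 ≤ α) (hα1 : α ≤ 1) (hs : s < 0) (v : H) :
    ‖Apow w l α (heatQ w l n s v)‖ ≤ 2 * (-s) ^ (-α) * Real.exp (l n * s / 2) * ‖v‖ := by
  rw [Apow_heatQ hw hl hs.le]
  exact norm_diagMul_le hw (abs_rpow_mul_heatQ_symbol_le hmono hl hα0 hα1 hs) v

theorem heatQ_mem_Dom (hw : Orthonormal ℝ w) (hmono : Monotone l) (hl : ∀ j, 0 ≤ l j)
    (hα0 : 0 ≤ α) (hα1 : α ≤ 1) (hs : s < 0) (v : H) : heatQ w l n s v ∈ Dom w l α := by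
  rw [mem_Dom_iff hl]
  simp only [inner_heatQ hw hl hs.le, ← mul_assoc]
  exact summable_sq_mul_inner hw (abs_rpow_mul_heatQ_symbol_le hmono hl hα0 hα1 hs) v

end Diagonal

section Projection

variable {w : ℕ → H} {n : ℕ}

def QprojCLM (w : ℕ → H) (n : ℕ) : H →L[ℝ] H :=
  ContinuousLinearMap.id ℝ H - ∑ j ∈ Finset.range n, (innerSL ℝ (w j)).smulRight (w j)

theorem QprojCLM_apply (x : H) : QprojCLM w n x = Qproj w n x := by
  simp only [QprojCLM, Qproj, Pproj, sub_apply, ContinuousLinearMap.coe_id',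
    id_eq, FunLike.coe_sum, Finset.sum_apply, ContinuousLinearMap.smulRight_apply,
    innerSL_apply_apply, real_inner_comm x]

theorem inner_Qproj (hw : Orthonormal ℝ w) (x : H) (k : ℕ) :
    ⟪Qproj w n x, w k⟫ = if n ≤ k then ⟪x, w k⟫ else 0 := by
  simp only [Qproj, Pproj, inner_sub_left, sum_inner, real_inner_smul_left,
    orthonormal_iff_ite.mp hw, mul_ite, mul_one, mul_zero, Finset.sum_ite_eq',
    Finset.mem_range]
  split_ifs <;> first | omega | ring

theorem Qproj_mem_Dom {l : ℕ → ℝ} {α : ℝ} (hw : Orthonormal ℝ w) (hl : ∀ j, 0 ≤ l j) {x : H}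
    (hx : x ∈ Dom w l α) : Qproj w n x ∈ Dom w l α := by
  refine Summable.of_nonneg_of_le
    (fun j => mul_nonneg (Real.rpow_nonneg (hl j) _) (sq_nonneg _)) (fun j => ?_) hx
  rw [inner_Qproj hw]
  split_ifs
  · exact le_rfl
  · simpa using mul_nonneg (Real.rpow_nonneg (hl j) (2 * α)) (sq_nonneg ⟪x, w j⟫)

theorem Qproj_heat [CompleteSpace H] {l : ℕ → ℝ} (hw : Orthonormal ℝ w)
    (hspan : ⊤ ≤ (Submodule.span ℝ (range w)).topologicalClosure) (hl : ∀ j, 0 ≤ l j) {t : ℝ}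
    (ht : 0 ≤ t) (v : H) : Qproj w n (heat w l t v) = heatQ w l n (-t) v := by
  refine hw.ext_inner hspan fun k => ?_
  rw [inner_Qproj hw, inner_heat hw hl ht, inner_heatQ hw hl (neg_nonpos.2 ht)]
  split_ifs <;> simp

end Projection

theorem Apow_integral [CompleteSpace H] {w : ℕ → H} {l : ℕ → ℝ} {α : ℝ} (hw : Orthonormal ℝ w)
    (hspan : ⊤ ≤ (Submodule.span ℝ (range w)).topologicalClosure) (hl : ∀ j, 0 ≤ l j)
    {X : Type*} [MeasurableSpace X] {μ : Measure X} {f : X → H} (hf : Integrable f μ)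
    (hAf : Integrable (fun x => Apow w l α (f x)) μ) (hdom : ∀ᵐ x ∂μ, f x ∈ Dom w l α)
    (hint : ∫ x, f x ∂μ ∈ Dom w l α) :
    Apow w l α (∫ x, f x ∂μ) = ∫ x, Apow w l α (f x) ∂μ := by
  refine hw.ext_inner hspan fun k => ?_
  rw [inner_Apow hw hl hint, real_inner_comm, ← integral_inner hf, real_inner_comm,
    ← integral_inner hAf, ← integral_const_mul]
  refine integral_congr_ae (hdom.mono fun x hx => ?_)
  dsimp only
  rw [← real_inner_comm (w k) (f x), ← real_inner_comm (w k), inner_Apow hw hl hx]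

theorem ae_restrict_Iic_lt_zero : ∀ᵐ s ∂(volume.restrict (Iic (0 : ℝ))), s < 0 := by
  rw [Measure.restrict_congr_set Iio_ae_eq_Iic.symm]
  exact ae_restrict_mem measurableSet_Iio

theorem aestronglyMeasurable_Iic_of_intervalIntegrable {E : Type*} [NormedAddCommGroup E]
    {g : ℝ → E} (hg : ∀ T, IntervalIntegrable g volume (-T) 0) :
    AEStronglyMeasurable g (volume.restrict (Iic 0)) := by
  refine (aecover_Ioi (μ := volume.restrict (Iic 0)) tendsto_neg_atTop_atBot).aestronglyMeasurable
    fun T => ?_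
  rw [Measure.restrict_restrict measurableSet_Ioi, Ioi_inter_Iic]
  exact (hg T).1.aestronglyMeasurable

theorem integrableOn_Iic_neg_rpow_mul_exp {α b : ℝ} (hα : α < 1) (hb : 0 < b) :
    IntegrableOn (fun s : ℝ => (-s) ^ (-α) * Real.exp (b * s)) (Iic 0) := by
  have h : IntegrableOn (fun x : ℝ => x ^ (-α) * Real.exp (-b * x)) (Ici 0) := by
    rw [integrableOn_Ici_iff_integrableOn_Ioi]
    simpa using integrableOn_rpow_mul_exp_neg_mul_rpow (by linarith) zero_lt_one hb
  rw [← (Measure.measurePreserving_neg (volume : Measure ℝ)).integrableOn_comp_preimage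
    (Homeomorph.neg ℝ).measurableEmbedding] at h
  simp only [Function.comp_def, neg_preimage, neg_Ici, neg_zero] at h
  refine h.congr_fun (fun x _ => ?_) measurableSet_Iic
  ring_nf

section HalfLine

variable [CompleteSpace H] {w : ℕ → H} {l : ℕ → ℝ} {α : ℝ} {n : ℕ} {f : ℝ → H} {M : ℝ}

theorem integrableOn_Iic_heatQ (hw : Orthonormal ℝ w)
    (hspan : ⊤ ≤ (Submodule.span ℝ (range w)).topologicalClosure) (hmono : Monotone l)
    (hpos : ∀ j, 0 < l j)
    (hint : ∀ T, IntervalIntegrable (fun s => heat w l (-s) (f s)) volume (-T) 0)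
    (hM : ∀ s, ‖f s‖ ≤ M) :
    IntegrableOn (fun s => heatQ w l n s (f s)) (Iic 0) := by
  have hl (j : ℕ) : 0 ≤ l j := (hpos j).le
  have hmeas : AEStronglyMeasurable (fun s => heatQ w l n s (f s)) (volume.restrict (Iic 0)) := by
    refine ((QprojCLM w n).continuous.comp_aestronglyMeasurable
      (aestronglyMeasurable_Iic_of_intervalIntegrable hint)).congr ?_
    filter_upwards [ae_restrict_mem measurableSet_Iic] with s hs
    simp only [QprojCLM_apply, Qproj_heat hw hspan hl (neg_nonneg.2 hs),
      neg_neg]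
  refine Integrable.mono' ((integrableOn_exp_mul_Iic (hpos n) 0).mul_const M) hmeas ?_
  filter_upwards [ae_restrict_mem measurableSet_Iic] with s hs
  exact (norm_heatQ_le hw hmono hs _).trans (by gcongr; exact hM s)

theorem integrableOn_Iic_Apow_heatQ (hw : Orthonormal ℝ w)
    (hspan : ⊤ ≤ (Submodule.span ℝ (range w)).topologicalClosure) (hmono : Monotone l)
    (hpos : ∀ j, 0 < l j) (hα0 : 0 ≤ α) (hα1 : α < 1)
    (hint : ∀ T, IntervalIntegrable (fun s => heat w l (-s) (f s)) volume (-T) 0)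
    (hM : ∀ s, ‖f s‖ ≤ M) :
    IntegrableOn (fun s => Apow w l α (heatQ w l n s (f s))) (Iic 0) := by
  have hl (j : ℕ) : 0 ≤ l j := (hpos j).le
  have hmeas : AEStronglyMeasurable (fun s => Apow w l α (heatQ w l n s (f s)))
      (volume.restrict (Iic 0)) :=
    hw.aestronglyMeasurable_of_inner_eq_mul hspan
      (integrableOn_Iic_heatQ hw hspan hmono hpos hint hM).aestronglyMeasurable (fun j => l j ^ α)
      fun j => ae_restrict_Iic_lt_zero.mono fun s hs =>
        inner_Apow hw hl (heatQ_mem_Dom hw hmono hl hα0 hα1.le hs _) j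
  have hbound : IntegrableOn (fun s => 2 * (-s) ^ (-α) * Real.exp (l n * s / 2) * M) (Iic 0) := by
    refine IntegrableOn.congr_fun (((integrableOn_Iic_neg_rpow_mul_exp hα1
      (half_pos (hpos n))).const_mul 2).mul_const M) (fun s _ => ?_) measurableSet_Iic
    rw [div_mul_eq_mul_div]
    ring
  refine Integrable.mono' hbound hmeas ?_
  filter_upwards [ae_restrict_Iic_lt_zero] with s hs
  have hrpow := Real.rpow_nonneg (neg_nonneg.2 hs.le) (-α)
  exact (norm_Apow_heatQ_le hw hmono hl hα0 hα1.le hs _).trans (by gcongr; exact hM s)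

theorem Qproj_eq_integral_heatQ (hw : Orthonormal ℝ w)
    (hspan : ⊤ ≤ (Submodule.span ℝ (range w)).topologicalClosure) (hmono : Monotone l)
    (hpos : ∀ j, 0 < l j) {x : ℝ → H} {B : ℝ} (hB : ∀ t, ‖x t‖ ≤ B)
    (hint : ∀ T, IntervalIntegrable (fun s => heat w l (-s) (f s)) volume (-T) 0)
    (hvoc : ∀ T, 0 ≤ T → x 0 = heat w l T (x (-T)) + ∫ s in -T..0, heat w l (-s) (f s))
    (hf : IntegrableOn (fun s => heatQ w l n s (f s)) (Iic 0)) :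
    Qproj w n (x 0) = ∫ s in Iic 0, heatQ w l n s (f s) := by
  have hl (j : ℕ) : 0 ≤ l j := (hpos j).le
  have hsplit : ∀ᶠ T in atTop, Qproj w n (x 0)
      = heatQ w l n (-T) (x (-T)) + ∫ s in -T..0, heatQ w l n s (f s) := by
    filter_upwards [eventually_ge_atTop 0] with T hT
    rw [hvoc T hT, ← QprojCLM_apply, map_add, ← (QprojCLM w n).intervalIntegral_comp_comm (hint T),
      QprojCLM_apply, Qproj_heat hw hspan hl hT]
    congr 1
    refine intervalIntegral.integral_congr fun s hs => ?_
    have hs0 : s ≤ 0 := by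
      rw [uIcc_of_le (by linarith)] at hs
      exact hs.2
    simp only [QprojCLM_apply, Qproj_heat hw hspan hl (neg_nonneg.2 hs0), neg_neg]
  have hdecay : Tendsto (fun T => heatQ w l n (-T) (x (-T))) atTop (𝓝 0) := by
    have hexp : Tendsto (fun T => Real.exp (l n * -T) * B) atTop (𝓝 0) := by
      simpa using ((Real.tendsto_exp_atBot.comp ((tendsto_const_mul_atBot_of_pos (hpos n)).2
        tendsto_neg_atTop_atBot)).mul_const B)
    refine squeeze_zero_norm' ?_ hexp
    filter_upwards [eventually_ge_atTop 0] with T hT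
    exact (norm_heatQ_le hw hmono (neg_nonpos.2 hT) _).trans (by gcongr; exact hB _)
  have hlim := hdecay.add (intervalIntegral_tendsto_integral_Iic 0 hf tendsto_neg_atTop_atBot)
  rw [zero_add] at hlim
  exact tendsto_nhds_unique (tendsto_const_nhds.congr' hsplit) hlim

end HalfLine

theorem exists_norm_le_of_Apow_lipschitz [CompleteSpace H] {w : ℕ → H} {l : ℕ → ℝ} {α K : ℝ}
    (hw : Orthonormal ℝ w) (hl : ∀ j, 0 ≤ l j) {S : Set H} (hsub : S ⊆ Dom w l α)
    (hbdd : ∃ R, ∀ u ∈ S, ‖Apow w l α u‖ ≤ R) (hK : 0 ≤ K) {F : H → H}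
    (hF : ∀ u ∈ S, ∀ v ∈ S, ‖F u - F v‖ ≤ K * ‖Apow w l α (u - v)‖) {u : H} (hu : u ∈ S) :
    ∃ M, ∀ v ∈ S, ‖F v‖ ≤ M := by
  obtain ⟨R, hR⟩ := hbdd
  refine ⟨‖F u‖ + K * (R + R), fun v hv => ?_⟩
  have hAvu : ‖Apow w l α (v - u)‖ ≤ R + R := by
    rw [Apow_sub hw hl (hsub hv) (hsub hu)]
    exact (norm_sub_le _ _).trans (add_le_add (hR v hv) (hR u hu))
  calc ‖F v‖ ≤ ‖F u‖ + ‖F v - F u‖ := norm_le_norm_add_norm_sub' _ _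
    _ ≤ ‖F u‖ + K * (R + R) := by
        gcongr
        exact (hF v hv u hu).trans (by gcongr)

theorem statement1_general [CompleteSpace H] (w : ℕ → H) (l : ℕ → ℝ)
    (hw : Orthonormal ℝ w)
    (hspan : ⊤ ≤ (Submodule.span ℝ (Set.range w)).topologicalClosure)
    (hmono : Monotone l) (hpos : ∀ j, 0 < l j)
    -- flow setting
    (α : ℝ) (hα0 : 0 ≤ α) (hα1 : α < 1)
    (K : ℝ) (hK : 0 < K)
    (𝒜 : Set H) (hcomp : IsCompact 𝒜) (hsub : 𝒜 ⊆ Dom w l α)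
    (hbdd : ∃ R : ℝ, ∀ u ∈ 𝒜, ‖Apow w l α u‖ ≤ R)
    (F : H → H)
    (hF : ∀ u ∈ 𝒜, ∀ v ∈ 𝒜, ‖F u - F v‖ ≤ K * ‖Apow w l α (u - v)‖)
    (Φ : ℝ → H → H)
    (hΦA : ∀ (t : ℝ), ∀ u ∈ 𝒜, Φ t u ∈ 𝒜)
    (hΦ0 : ∀ u ∈ 𝒜, Φ 0 u = u)
    (hInt : ∀ u ∈ 𝒜, ∀ t₀ t : ℝ,
      IntervalIntegrable (fun s => heat w l (t - s) (F (Φ s u))) volume t₀ t)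
    (hVoc : ∀ u ∈ 𝒜, ∀ t₀ t : ℝ, t₀ ≤ t →
      Φ t u = heat w l (t - t₀) (Φ t₀ u) + ∫ s in t₀..t, heat w l (t - s) (F (Φ s u)))
    -- conclusion
    (u : H) (hu : u ∈ 𝒜) (n : ℕ) :
    IntegrableOn (fun s => heatQ w l n s (F (Φ s u))) (Set.Iic 0) volume ∧
    IntegrableOn (fun s => Apow w l α (heatQ w l n s (F (Φ s u)))) (Set.Iic 0) volume ∧
    Qproj w n u = ∫ s in Set.Iic (0 : ℝ), heatQ w l n s (F (Φ s u)) ∧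
    Apow w l α (Qproj w n u)
      = ∫ s in Set.Iic (0 : ℝ), Apow w l α (heatQ w l n s (F (Φ s u))) := by
  have hl (j : ℕ) : 0 ≤ l j := (hpos j).le
  obtain ⟨M, hM⟩ := exists_norm_le_of_Apow_lipschitz hw hl hsub hbdd hK.le hF hu
  obtain ⟨B, hB⟩ := isBounded_iff_forall_norm_le.mp hcomp.isBounded
  have hFΦ (s : ℝ) : ‖F (Φ s u)‖ ≤ M := hM _ (hΦA s u hu)
  have hint (T : ℝ) :
      IntervalIntegrable (fun s => heat w l (-s) (F (Φ s u))) volume (-T) 0 := by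
    simpa only [zero_sub] using hInt u hu (-T) 0
  have hvoc (T : ℝ) (hT : 0 ≤ T) : Φ 0 u
      = heat w l T (Φ (-T) u) + ∫ s in -T..0, heat w l (-s) (F (Φ s u)) := by
    simpa only [zero_sub, neg_neg] using hVoc u hu (-T) 0 (neg_nonpos.2 hT)
  have hQ := integrableOn_Iic_heatQ (n := n) hw hspan hmono hpos hint hFΦ
  have hAQ := integrableOn_Iic_Apow_heatQ (n := n) hw hspan hmono hpos hα0 hα1 hint hFΦ
  have hQu : Qproj w n u = ∫ s in Iic 0, heatQ w l n s (F (Φ s u)) := by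
    simpa only [hΦ0 u hu] using Qproj_eq_integral_heatQ hw hspan hmono hpos
      (x := fun t => Φ t u) (fun t => hB _ (hΦA t u hu)) hint hvoc hQ
  refine ⟨hQ, hAQ, hQu, ?_⟩
  rw [hQu]
  exact Apow_integral hw hspan hl hQ hAQ
    (ae_restrict_Iic_lt_zero.mono fun s hs => heatQ_mem_Dom hw hmono hl hα0 hα1.le hs _)
    (hQu ▸ Qproj_mem_Dom hw hl (hsub hu))

/-- in the diagonal and flow settings, for every `u ∈ 𝒜` and `n ≥ 0` the
Bochner integral `∫_{-∞}^0 e^{As} Q_n F(Φ_s u) ds` converges in `D(A^α)` and equals `Q_n u`. -/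
theorem statement1 [CompleteSpace H] (w : ℕ → H) (l : ℕ → ℝ)
    (hw : Orthonormal ℝ w)
    (hspan : ⊤ ≤ (Submodule.span ℝ (Set.range w)).topologicalClosure)
    (hmono : Monotone l) (hpos : ∀ j, 0 < l j)
    (hlim : Filter.Tendsto l Filter.atTop Filter.atTop)
    -- flow setting
    (α : ℝ) (hα0 : 0 ≤ α) (hα1 : α < 1)
    (K C μ : ℝ) (hK : 0 < K) (hC : 1 ≤ C) (hμ : 0 < μ)
    (𝒜 : Set H) (hcomp : IsCompact 𝒜) (hsub : 𝒜 ⊆ Dom w l α)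
    (hbdd : ∃ R : ℝ, ∀ u ∈ 𝒜, ‖Apow w l α u‖ ≤ R)
    (F : H → H)
    (hF : ∀ u ∈ 𝒜, ∀ v ∈ 𝒜, ‖F u - F v‖ ≤ K * ‖Apow w l α (u - v)‖)
    (Φ : ℝ → H → H)
    (hΦA : ∀ (t : ℝ), ∀ u ∈ 𝒜, Φ t u ∈ 𝒜)
    (hΦ0 : ∀ u ∈ 𝒜, Φ 0 u = u)
    (hΦadd : ∀ (t s : ℝ), ∀ u ∈ 𝒜, Φ (t + s) u = Φ t (Φ s u))
    (hInt : ∀ u ∈ 𝒜, ∀ t₀ t : ℝ,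
      IntervalIntegrable (fun s => heat w l (t - s) (F (Φ s u))) volume t₀ t)
    (hVoc : ∀ u ∈ 𝒜, ∀ t₀ t : ℝ, t₀ ≤ t →
      Φ t u = heat w l (t - t₀) (Φ t₀ u) + ∫ s in t₀..t, heat w l (t - s) (F (Φ s u)))
    (hLip : ∀ (t : ℝ), ∀ u ∈ 𝒜, ∀ v ∈ 𝒜,
      ‖Apow w l α (Φ t u - Φ t v)‖ ≤ C * Real.exp (μ * |t|) * ‖Apow w l α (u - v)‖)
    -- conclusion
    (u : H) (hu : u ∈ 𝒜) (n : ℕ) :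
    IntegrableOn (fun s => heatQ w l n s (F (Φ s u))) (Set.Iic 0) volume ∧
    IntegrableOn (fun s => Apow w l α (heatQ w l n s (F (Φ s u)))) (Set.Iic 0) volume ∧
    Qproj w n u = ∫ s in Set.Iic (0 : ℝ), heatQ w l n s (F (Φ s u)) ∧
    Apow w l α (Qproj w n u)
      = ∫ s in Set.Iic (0 : ℝ), Apow w l α (heatQ w l n s (F (Φ s u))) :=
  statement1_general w l hw hspan hmono hpos α hα0 hα1 K hK 𝒜 hcomp hsub hbdd F hF Φ hΦA hΦ0 hInt
    hVoc u hu n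
end
end

section
/- Let p > 1, γ > 0 and δ ≥ 0, and let y : (0,∞) → ℝ be a nonnegative differentiable function satisfying y'(t) + γ y(t)^p ≤ δ for all t > 0. Then for every t > 0, y(t) ≤ (δ/γ)^{1/p} + (γ (p−1) t)^{−1/(p−1)}. -/
open Real Set Filter Topology

/-!
Let `M = (δ/γ)^{1/p}` and let `w_ε(t) = (γ (p-1) (t-ε))^{-1/(p-1)}`, the solution of
`w' = -γ w^p` that blows up at `ε`. By superadditivity of `u ↦ u^p`, `M + w_ε` is a
supersolution of `y' = δ - γ y^p` on `(ε, ∞)`. Since `y` is bounded near `ε` while `w_ε` blows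
up there, `y` starts below `M + w_ε`, and the comparison principle for the decreasing
right-hand side keeps it there. Letting `ε → 0` gives the bound.
-/

theorem le_of_deriv_le_of_le_deriv_of_strictAntiOn {F y y' φ φ' : ℝ → ℝ} {a b : ℝ}
    (hF : StrictAntiOn F (Ici 0))
    (hy : ContinuousOn y (Icc a b)) (hy' : ∀ x ∈ Ico a b, HasDerivWithinAt y (y' x) (Ici x) x)
    (hφ : ContinuousOn φ (Icc a b)) (hφ' : ∀ x ∈ Ico a b, HasDerivWithinAt φ (φ' x) (Ici x) x)
    (hφ_nonneg : ∀ x ∈ Ico a b, 0 ≤ φ x) (ha : y a ≤ φ a)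
    (hsub : ∀ x ∈ Ico a b, y' x ≤ F (y x)) (hsuper : ∀ x ∈ Ico a b, F (φ x) ≤ φ' x) :
    ∀ ⦃x⦄, x ∈ Icc a b → y x ≤ φ x := by
  intro x hx
  refine le_of_forall_pos_le_add fun η hη => ?_
  -- Raising the barrier by `η` makes the derivative comparison strict where the graphs touch.
  refine image_le_of_deriv_right_lt_deriv_boundary' hy hy' (B := fun x => φ x + η)
    (by linarith) (hφ.add continuousOn_const) (fun x hx => (hφ' x hx).add_const η)
    (fun x hx hyx => ?_) hx
  calc y' x ≤ F (y x) := hsub x hx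
    _ < F (φ x) := by
      rw [hyx]
      exact hF (hφ_nonneg x hx) (by simp only [mem_Ici]; linarith [hφ_nonneg x hx])
        (by linarith)
    _ ≤ φ' x := hsuper x hx

noncomputable def blowupSolution (γ p ε t : ℝ) : ℝ := (γ * (p - 1) * (t - ε)) ^ (-(1 / (p - 1)))

section blowupSolution

variable {γ p ε : ℝ}

theorem blowupSolution_nonneg {t : ℝ} (hγ : 0 < γ) (hp : 1 < p) (ht : ε < t) :
    0 ≤ blowupSolution γ p ε t :=
  rpow_nonneg (mul_nonneg (by nlinarith) (sub_nonneg.2 ht.le)) _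

theorem hasDerivAt_blowupSolution (hγ : 0 < γ) (hp : 1 < p) {t : ℝ} (ht : ε < t) :
    HasDerivAt (blowupSolution γ p ε) (-γ * blowupSolution γ p ε t ^ p) t := by
  have hp1 : 0 < p - 1 := by linarith
  have hX : 0 < γ * (p - 1) * (t - ε) := by have := sub_pos.2 ht; positivity
  have hlin : HasDerivAt (fun s => γ * (p - 1) * (s - ε)) (γ * (p - 1)) t := by
    simpa using ((hasDerivAt_id t).sub_const ε).const_mul (γ * (p - 1))
  convert hlin.rpow_const (p := -(1 / (p - 1))) (Or.inl hX.ne') using 1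
  · unfold blowupSolution; rfl
  · unfold blowupSolution
    rw [← rpow_mul hX.le]
    have hexp : -(1 / (p - 1)) * p = -(1 / (p - 1)) - 1 := by field_simp; ring
    rw [hexp]
    field_simp

theorem tendsto_blowupSolution_nhdsGT (hγ : 0 < γ) (hp : 1 < p) :
    Tendsto (blowupSolution γ p ε) (𝓝[>] ε) atTop := by
  have hk : 0 < γ * (p - 1) := by nlinarith
  refine (tendsto_rpow_neg_nhdsGT_zero (neg_lt_zero.2 (by simpa using hp))).comp ?_
  refine tendsto_nhdsWithin_iff.2 ⟨?_, ?_⟩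
  · have : ContinuousAt (fun s => γ * (p - 1) * (s - ε)) ε := by fun_prop
    simpa using this.tendsto.mono_left nhdsWithin_le_nhds
  · filter_upwards [self_mem_nhdsWithin] with s hs
    exact mul_pos hk (sub_pos.2 hs)

theorem continuousAt_blowupSolution_shift {t : ℝ} (hγ : 0 < γ) (hp : 1 < p) (ht : ε < t) :
    ContinuousAt (fun ε => blowupSolution γ p ε t) ε := by
  have hX : γ * (p - 1) * (t - ε) ≠ 0 := by have := sub_pos.2 ht; positivity
  unfold blowupSolution
  fun_prop (disch := exact Or.inl hX)

end blowupSolution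

theorem sub_mul_rpow_add_le_neg_mul_rpow {γ δ p w : ℝ} (hγ : 0 < γ) (hδ : 0 ≤ δ) (hp : 1 ≤ p)
    (hw : 0 ≤ w) : δ - γ * ((δ / γ) ^ (1 / p) + w) ^ p ≤ -γ * w ^ p := by
  have hM : γ * ((δ / γ) ^ (1 / p)) ^ p = δ := by
    rw [one_div, rpow_inv_rpow (by positivity) (by linarith)]
    field_simp
  have := add_rpow_le_rpow_add (rpow_nonneg (div_nonneg hδ hγ.le) (1 / p)) hw hp
  nlinarith

theorem le_add_blowupSolution {p γ δ ε t : ℝ} {y : ℝ → ℝ} (hp : 1 < p) (hγ : 0 < γ) (hδ : 0 ≤ δ)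
    (hdiff : ∀ t : ℝ, 0 < t → DifferentiableAt ℝ y t)
    (hineq : ∀ t : ℝ, 0 < t → deriv y t + γ * y t ^ p ≤ δ) (hε : 0 < ε) (ht : ε < t) :
    y t ≤ (δ / γ) ^ (1 / p) + blowupSolution γ p ε t := by
  have hy : ContinuousOn y (Icc ε t) := fun x hx =>
    (hdiff x (hε.trans_le hx.1)).continuousAt.continuousWithinAt
  obtain ⟨B, hB⟩ := isCompact_Icc.bddAbove_image hy
  obtain ⟨s, hBs, hs⟩ := (((tendsto_blowupSolution_nhdsGT hγ hp).eventually_ge_atTop B).and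
    (Ioo_mem_nhdsGT ht)).exists
  have hM : 0 ≤ (δ / γ) ^ (1 / p) := rpow_nonneg (div_nonneg hδ hγ.le) _
  have hpos : ∀ x ∈ Icc s t, ε < x := fun x hx => hs.1.trans_le hx.1
  have hpos' : ∀ x ∈ Ico s t, ε < x := fun x hx => hpos x (Ico_subset_Icc_self hx)
  have hφ' : ∀ x ∈ Icc s t, HasDerivAt (fun x => (δ / γ) ^ (1 / p) + blowupSolution γ p ε x)
      (-γ * blowupSolution γ p ε x ^ p) x := fun x hx =>
    (hasDerivAt_blowupSolution hγ hp (hpos x hx)).const_add _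
  have hF : StrictAntiOn (fun u => δ - γ * u ^ p) (Ici 0) := fun u hu v _ huv => by
    have := rpow_lt_rpow hu huv (by linarith : 0 < p)
    dsimp only
    nlinarith
  refine le_of_deriv_le_of_le_deriv_of_strictAntiOn hF (hy.mono (Icc_subset_Icc_left hs.1.le))
    (fun x hx => (hdiff x (hε.trans (hpos' x hx))).hasDerivAt.hasDerivWithinAt)
    (fun x hx => (hφ' x hx).continuousAt.continuousWithinAt)
    (fun x hx => (hφ' x (Ico_subset_Icc_self hx)).hasDerivWithinAt)
    (fun x hx => add_nonneg hM (blowupSolution_nonneg hγ hp (hpos' x hx)))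
    ?_ (fun x hx => ?_) (fun x hx => ?_) ⟨hs.2.le, le_rfl⟩
  · calc y s ≤ B := hB ⟨s, ⟨hs.1.le, hs.2.le⟩, rfl⟩
      _ ≤ blowupSolution γ p ε s := hBs
      _ ≤ _ := le_add_of_nonneg_left hM
  · linarith [hineq x (hε.trans (hpos' x hx))]
  · exact sub_mul_rpow_add_le_neg_mul_rpow hγ hδ hp.le
      (blowupSolution_nonneg hγ hp (hpos' x hx))

theorem statement6_general (p γ δ : ℝ) (hp : 1 < p) (hγ : 0 < γ) (hδ : 0 ≤ δ)
    (y : ℝ → ℝ)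
    (hdiff : ∀ t : ℝ, 0 < t → DifferentiableAt ℝ y t)
    (hineq : ∀ t : ℝ, 0 < t → deriv y t + γ * y t ^ p ≤ δ) :
    ∀ t : ℝ, 0 < t →
      y t ≤ (δ / γ) ^ (1 / p) + (γ * (p - 1) * t) ^ (-(1 / (p - 1))) := by
  intro t ht
  have hlim : Tendsto (fun ε => (δ / γ) ^ (1 / p) + blowupSolution γ p ε t) (𝓝[>] 0)
      (𝓝 ((δ / γ) ^ (1 / p) + blowupSolution γ p 0 t)) :=
    tendsto_nhdsWithin_of_tendsto_nhds
      ((continuousAt_blowupSolution_shift hγ hp ht).const_add _).tendsto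
  have hshifted : ∀ᶠ ε in 𝓝[>] (0 : ℝ), y t ≤ (δ / γ) ^ (1 / p) + blowupSolution γ p ε t := by
    filter_upwards [Ioo_mem_nhdsGT ht] with ε hε
    exact le_add_blowupSolution hp hγ hδ hdiff hineq hε.1 hε.2
  simpa [blowupSolution] using ge_of_tendsto hlim hshifted

/-- Temam's Gronwall-type lemma: if `y : (0,∞) → ℝ` is nonnegative,
differentiable and satisfies `y' + γ y^p ≤ δ` with `p > 1`, `γ > 0`, `δ ≥ 0`, then
`y(t) ≤ (δ/γ)^{1/p} + (γ (p-1) t)^{-1/(p-1)}` for every `t > 0`. -/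
theorem statement6 (p γ δ : ℝ) (hp : 1 < p) (hγ : 0 < γ) (hδ : 0 ≤ δ)
    (y : ℝ → ℝ)
    (hy : ∀ t : ℝ, 0 < t → 0 ≤ y t)
    (hdiff : ∀ t : ℝ, 0 < t → DifferentiableAt ℝ y t)
    (hineq : ∀ t : ℝ, 0 < t → deriv y t + γ * y t ^ p ≤ δ) :
    ∀ t : ℝ, 0 < t →
      y t ≤ (δ / γ) ^ (1 / p) + (γ * (p - 1) * t) ^ (-(1 / (p - 1))) :=
  statement6_general p γ δ hp hγ hδ y hdiff hineq
end

section
/- In the diagonal setting, let 𝒜 ⊆ D(A) contain at least two points, let C > 0, and let M₁ be a constant with M₁ ≥ 4 sup_{u ∈ 𝒜} ‖u‖ such that ‖A(u − v)‖ ≤ C ‖u − v‖ log(M₁²/‖u − v‖²) for all u,v ∈ 𝒜 with u ≠ v. Then for every n ≥ 0 there exists a map Φ_n : P_n H → Q_n H satisfying ‖Φ_n(p₁) − Φ_n(p₂)‖ ≤ ‖p₁ − p₂‖ for all p₁, p₂ ∈ P_n H, such that every u ∈ 𝒜 satisfies inf_{p ∈ P_n H} ‖u − (p + Φ_n(p))‖²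 ≤ 2 M₁² e^{−λ_{n+1}/(√2 C)}; that is, 𝒜 lies within a distance whose square is at most 2 M₁² e^{−λ_{n+1}/(√2 C)} of the graph G[Φ_n] = {p + Φ_n(p) : p ∈ P_n H}. -/
open scoped RealInnerProductSpace

noncomputable section

variable {H : Type*} [NormedAddCommGroup H] [InnerProductSpace ℝ H]

open Finset Filter Topology

/-!
If `x = u - v ≠ 0` with `u, v ∈ 𝒜` satisfies `‖P_n x‖ < ‖Q_n x‖`, then `‖x‖ ≤ √2 ‖Q_n x‖`, and the
spectral gap `λ_{n+1} ‖Q_n x‖ ≤ ‖A x‖` combined with the log-Lipschitz bound gives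
`λ_{n+1} ≤ √2 C log (M₁² / ‖x‖²)`, that is `‖x‖² ≤ M₁² e^{-λ_{n+1}/(√2 C)}`.

Hence a maximal subset `B ⊆ 𝒜` all of whose differences satisfy `‖Q_n x‖ ≤ ‖P_n x‖` is within that
distance of every point of `𝒜`, and it is the graph of the 1-Lipschitz map `Q_n ∘ (P_n|_B)⁻¹` on
`P_n B`. Kirszbraun's theorem extends this map to all of `P_n H`. It is proved for finitely many
points by minimising the largest excess `‖y - q_i‖² - ‖x - p_i‖²` over the convex hull of the `q_i`,
then for arbitrary families through the minimal-norm points of finite intersections of balls, and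
finally for extensions by Zorn's lemma.
-/

theorem Set.Pairwise.exists_maximal_superset {α : Type*} {r : α → α → Prop} {s t : Set α}
    (hs : s.Pairwise r) (hst : s ⊆ t) :
    ∃ m, s ⊆ m ∧ Maximal (fun m => m ⊆ t ∧ m.Pairwise r) m :=
  zorn_subset_nonempty {m | m ⊆ t ∧ m.Pairwise r} (fun c hc hchain _ =>
    ⟨⋃₀ c, ⟨Set.sUnion_subset fun _ hm => (hc hm).1,
      (Set.pairwise_sUnion hchain.directedOn).2 fun _ hm => (hc hm).2⟩,
      fun _ hm => Set.subset_sUnion_of_mem hm⟩) s ⟨hst, hs⟩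

section Kirszbraun

variable {ι E F : Type*} [NormedAddCommGroup E] [InnerProductSpace ℝ E]
  [NormedAddCommGroup F] [InnerProductSpace ℝ F]

theorem two_mul_norm_sum_smul_sub_sq (s : Finset ι) {θ : ι → ℝ} (hθ : ∑ i ∈ s, θ i = 1)
    (z : F) (a : ι → F) :
    2 * ‖∑ i ∈ s, θ i • (z - a i)‖ ^ 2
      = 2 * ∑ i ∈ s, θ i * ‖z - a i‖ ^ 2 - ∑ i ∈ s, ∑ j ∈ s, θ i * θ j * ‖a i - a j‖ ^ 2 := by
  have hpolar : ∀ i j,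
      2 * ⟪z - a i, z - a j⟫ = ‖z - a i‖ ^ 2 + ‖z - a j‖ ^ 2 - ‖a i - a j‖ ^ 2 := by
    intro i j
    rw [norm_sub_rev (a i) (a j), show a j - a i = (z - a i) - (z - a j) by abel,
      norm_sub_sq_real (z - a i) (z - a j)]
    ring
  have hleft : ∑ i ∈ s, ∑ j ∈ s, θ i * θ j * ‖z - a i‖ ^ 2 = ∑ i ∈ s, θ i * ‖z - a i‖ ^ 2 := by
    refine sum_congr rfl fun i _ => ?_
    rw [← sum_mul, ← mul_sum, hθ, mul_one]
  have hright : ∑ i ∈ s, ∑ j ∈ s, θ i * θ j * ‖z - a j‖ ^ 2 = ∑ j ∈ s, θ j * ‖z - a j‖ ^ 2 := by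
    rw [sum_comm]
    refine sum_congr rfl fun j _ => ?_
    rw [← sum_mul, ← sum_mul, hθ, one_mul]
  calc 2 * ‖∑ i ∈ s, θ i • (z - a i)‖ ^ 2
      = ∑ i ∈ s, ∑ j ∈ s, θ i * θ j * (2 * ⟪z - a i, z - a j⟫) := by
        rw [← real_inner_self_eq_norm_sq, sum_inner, mul_sum]
        refine sum_congr rfl fun i _ => ?_
        rw [inner_sum, mul_sum]
        refine sum_congr rfl fun j _ => ?_
        rw [real_inner_smul_left, real_inner_smul_right]
        ring
    _ = _ := by
        simp only [hpolar, mul_sub, mul_add, sum_sub_distrib, sum_add_distrib, hleft, hright]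
        ring

theorem exists_norm_sub_le_of_mem_convexHull (s : Set ι) (p : ι → E) (q : ι → F)
    (hpq : ∀ i ∈ s, ∀ j ∈ s, ‖q i - q j‖ ≤ ‖p i - p j‖) (x : E) {y : F}
    (hy : y ∈ convexHull ℝ (q '' s)) : ∃ i ∈ s, ‖y - q i‖ ≤ ‖x - p i‖ := by
  obtain ⟨κ, _, θ, z, hθ₀, hθ₁, hz, rfl⟩ := mem_convexHull_iff_exists_fintype.mp hy
  choose idx hidx hqidx using hz
  by_contra! hlt
  -- At the barycentre `y`, `∑ θ ‖y - q‖²` is half the weighted sum of the `‖q - q'‖²`, while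
  -- `∑ θ ‖x - p‖²` is at least half the weighted sum of the `‖p - p'‖²`.
  have hbary : ∑ k, θ k • (∑ k', θ k' • z k' - z k) = 0 := by
    simp only [smul_sub, sum_sub_distrib, ← sum_smul, hθ₁, one_smul, sub_self]
  have hq := two_mul_norm_sum_smul_sub_sq univ hθ₁ (∑ k, θ k • z k) z
  have hp := two_mul_norm_sum_smul_sub_sq univ hθ₁ x (p ∘ idx)
  have hpq' : ∑ k, ∑ k', θ k * θ k' * ‖z k - z k'‖ ^ 2
      ≤ ∑ k, ∑ k', θ k * θ k' * ‖(p ∘ idx) k - (p ∘ idx) k'‖ ^ 2 := by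
    gcongr with k _ k' _
    · exact mul_nonneg (hθ₀ k) (hθ₀ k')
    · rw [← hqidx k, ← hqidx k']
      exact hpq _ (hidx k) _ (hidx k')
  obtain ⟨k, -, hk⟩ := exists_lt_of_sum_lt (s := Finset.univ) (f := fun _ => 0) (g := θ)
    (by rw [sum_const_zero, hθ₁]; exact one_pos)
  have hstrict : ∑ k', θ k' * ‖x - (p ∘ idx) k'‖ ^ 2
      < ∑ k', θ k' * ‖∑ k, θ k • z k - z k'‖ ^ 2 := by
    refine sum_lt_sum (fun k' _ => ?_) ⟨k, mem_univ _, ?_⟩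
    · gcongr
      · exact hθ₀ k'
      · rw [← hqidx k']; exact (hlt _ (hidx k')).le
    · gcongr
      rw [← hqidx k]; exact hlt _ (hidx k)
  rw [hbary, norm_zero] at hq
  nlinarith [sq_nonneg ‖∑ k, θ k • (x - (p ∘ idx) k)‖]

theorem norm_add_smul_sub_sub_sq_lt {y z v : F} (hv : ⟪y - z, v - z⟫ ≤ 0) (hyz : y ≠ z) {t : ℝ}
    (ht₀ : 0 < t) (ht₁ : t ≤ 1) : ‖y + t • (z - y) - v‖ ^ 2 < ‖y - v‖ ^ 2 := by
  have hu : 0 < ‖z - y‖ := norm_pos_iff.2 (sub_ne_zero.2 hyz.symm)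
  have hinner : ⟪y - v, z - y⟫ ≤ -‖z - y‖ ^ 2 := by
    have : ⟪y - v, z - y⟫ = ⟪y - z, v - z⟫ - ‖z - y‖ ^ 2 := by
      rw [← real_inner_self_eq_norm_sq]
      simp only [inner_sub_left, inner_sub_right, real_inner_comm]
      ring
    linarith
  rw [show y + t • (z - y) - v = (y - v) + t • (z - y) by abel, norm_add_sq_real,
    real_inner_smul_right, norm_smul, Real.norm_of_nonneg ht₀.le]
  nlinarith [mul_pos ht₀ (mul_pos hu hu)]

theorem mem_convexHull_of_isMinOn_sup' {s : Finset ι} (hs : s.Nonempty) (q : ι → F) (c : ι → ℝ)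
    {K : Set F} (hK : Convex ℝ K) (hqK : ∀ i ∈ s, q i ∈ K) {y₀ : F} (hy₀ : y₀ ∈ K)
    (hmin : IsMinOn (fun y => s.sup' hs fun i => ‖y - q i‖ ^ 2 - c i) K y₀) :
    y₀ ∈ convexHull ℝ
      (q '' {i | i ∈ s ∧ ‖y₀ - q i‖ ^ 2 - c i = s.sup' hs fun i => ‖y₀ - q i‖ ^ 2 - c i}) := by
  set G : F → ℝ := fun y => s.sup' hs fun i => ‖y - q i‖ ^ 2 - c i
  set I : Set ι := {i | i ∈ s ∧ ‖y₀ - q i‖ ^ 2 - c i = G y₀}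
  by_contra hy₀T
  -- Stepping from `y₀` towards its nearest point `z` in the hull of the active centres strictly
  -- decreases every active term, and for small steps the inactive ones stay below the maximum.
  have hIne : I.Nonempty :=
    let ⟨i, hi, h⟩ := exists_mem_eq_sup' hs fun i => ‖y₀ - q i‖ ^ 2 - c i
    ⟨i, hi, h.symm⟩
  obtain ⟨z, hzT, hz⟩ := exists_norm_eq_iInf_of_complete_convex
    ((hIne.image q).mono (subset_convexHull ℝ _))
    (((s.finite_toSet.subset fun i (hi : i ∈ I) => hi.1).image q).isCompact_convexHull
      (𝕜 := ℝ)).isComplete (convex_convexHull ℝ _) y₀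
  have hproj := (norm_eq_iInf_iff_real_inner_le_zero (convex_convexHull ℝ _) hzT).1 hz
  have hzK : z ∈ K :=
    convexHull_min (Set.image_subset_iff.2 fun i hi => hqK i hi.1) hK hzT
  have hyz : y₀ ≠ z := fun h => hy₀T (h ▸ hzT)
  have hev : ∀ i ∈ s, ∀ᶠ t : ℝ in 𝓝[>] 0, ‖y₀ + t • (z - y₀) - q i‖ ^ 2 - c i < G y₀ := by
    intro i hi
    by_cases hiI : i ∈ I
    · filter_upwards [Ioc_mem_nhdsGT one_pos] with t ht
      have := norm_add_smul_sub_sub_sq_lt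
        (hproj _ (subset_convexHull ℝ _ (Set.mem_image_of_mem q hiI))) hyz ht.1 ht.2
      linarith [hiI.2]
    · have hlt : ‖y₀ - q i‖ ^ 2 - c i < G y₀ :=
        (le_sup' (fun i => ‖y₀ - q i‖ ^ 2 - c i) hi).lt_of_ne fun h => hiI ⟨hi, h⟩
      refine (Tendsto.eventually_lt_const hlt ?_)
      have : Continuous fun t : ℝ => ‖y₀ + t • (z - y₀) - q i‖ ^ 2 - c i := by fun_prop
      simpa using (this.tendsto 0).mono_left nhdsWithin_le_nhds
  obtain ⟨t, ht, htI⟩ := (((eventually_all_finset s).2 hev).and (Ioc_mem_nhdsGT one_pos)).exists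
  exact ((sup'_lt_iff hs).2 ht).not_ge (hmin (hK.add_smul_sub_mem hy₀ hzK ⟨htI.1.le, htI.2⟩))

theorem exists_forall_norm_sub_le_of_finset (s : Finset ι) (p : ι → E) (q : ι → F)
    (hpq : ∀ i ∈ s, ∀ j ∈ s, ‖q i - q j‖ ≤ ‖p i - p j‖) (x : E) :
    ∃ y, ∀ i ∈ s, ‖y - q i‖ ≤ ‖x - p i‖ := by
  rcases s.eq_empty_or_nonempty with rfl | hs
  · exact ⟨0, by simp⟩
  set G : F → ℝ := fun y => s.sup' hs fun i => ‖y - q i‖ ^ 2 - ‖x - p i‖ ^ 2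
  have hqK : ∀ i ∈ s, q i ∈ convexHull ℝ (q '' s) := fun i hi =>
    subset_convexHull ℝ _ (Set.mem_image_of_mem q hi)
  obtain ⟨y₀, hy₀, hmin⟩ :=
    ((s.finite_toSet.image q).isCompact_convexHull (𝕜 := ℝ)).exists_isMinOn
    ((hs.to_set.image q).mono (subset_convexHull ℝ _))
    (Continuous.finset_sup'_apply (f := fun i y => ‖y - q i‖ ^ 2 - ‖x - p i‖ ^ 2) hs
      fun i _ => by fun_prop).continuousOn
  obtain ⟨i, ⟨-, hiG⟩, hle⟩ := exists_norm_sub_le_of_mem_convexHull _ p q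
    (fun i hi j hj => hpq i hi.1 j hj.1) x
    (mem_convexHull_of_isMinOn_sup' hs q _ (convex_convexHull ℝ _) hqK hy₀ hmin)
  refine ⟨y₀, fun j hj => ?_⟩
  have hj : ‖y₀ - q j‖ ^ 2 - ‖x - p j‖ ^ 2 ≤ G y₀ :=
    le_sup' (fun i => ‖y₀ - q i‖ ^ 2 - ‖x - p i‖ ^ 2) hj
  have hi : ‖y₀ - q i‖ ^ 2 ≤ ‖x - p i‖ ^ 2 := by gcongr
  exact (pow_le_pow_iff_left₀ (norm_nonneg _) (norm_nonneg _) two_ne_zero).1 (by linarith)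

theorem exists_mem_forall_norm_le {S : Set F} (hne : S.Nonempty) (hS : IsComplete S)
    (hc : Convex ℝ S) : ∃ y ∈ S, ∀ v ∈ S, ‖y‖ ≤ ‖v‖ := by
  obtain ⟨y, hy, h⟩ := exists_norm_eq_iInf_of_complete_convex hne hS hc 0
  simp only [zero_sub, norm_neg] at h
  exact ⟨y, hy, fun v hv =>
    h ▸ ciInf_le (f := fun w : S => ‖(w : F)‖) ⟨0, Set.forall_mem_range.2 fun _ => norm_nonneg _⟩
      ⟨v, hv⟩⟩

theorem norm_sub_sq_le_of_forall_norm_le {S : Set F} (hS : Convex ℝ S) {y v : F} (hy : y ∈ S)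
    (hmin : ∀ u ∈ S, ‖y‖ ≤ ‖u‖) (hv : v ∈ S) : ‖y - v‖ ^ 2 ≤ 2 * (‖v‖ ^ 2 - ‖y‖ ^ 2) := by
  have hmid : ‖y‖ ≤ ‖(1 / 2 : ℝ) • y + (1 / 2 : ℝ) • v‖ :=
    hmin _ (hS hy hv (by norm_num) (by norm_num) (by norm_num))
  rw [← smul_add, norm_smul, Real.norm_of_nonneg (by norm_num)] at hmid
  nlinarith [parallelogram_law_with_norm ℝ y v, norm_nonneg y]

theorem inter_iInter_nonempty_of_convex [CompleteSpace F] {K₀ : Set F}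
    (hb : Bornology.IsBounded K₀) (hc₀ : IsClosed K₀) (hv₀ : Convex ℝ K₀) {K : ι → Set F}
    (hc : ∀ i, IsClosed (K i)) (hv : ∀ i, Convex ℝ (K i))
    (h : ∀ u : Finset ι, (K₀ ∩ ⋂ i ∈ u, K i).Nonempty) : (K₀ ∩ ⋂ i, K i).Nonempty := by
  classical
  set S : Finset ι → Set F := fun u => K₀ ∩ ⋂ i ∈ u, K i
  have hSc : ∀ u, IsClosed (S u) := fun u => hc₀.inter (isClosed_biInter fun i _ => hc i)
  have hSv : ∀ u, Convex ℝ (S u) := fun u => hv₀.inter (convex_iInter₂ fun i _ => hv i)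
  have hSanti : Antitone S := fun u u' huu' =>
    Set.inter_subset_inter_right _ (Set.biInter_subset_biInter_left huu')
  choose y hyS hymin using fun u => exists_mem_forall_norm_le (h u) (hSc u).isComplete (hSv u)
  obtain ⟨R, hR⟩ := hb.exists_norm_le
  have hmono : Monotone fun u => ‖y u‖ := fun u u' huu' => hymin u _ (hSanti huu' (hyS u'))
  have hbdd : BddAbove (Set.range fun u => ‖y u‖) :=
    ⟨R, Set.forall_mem_range.2 fun u => hR _ (hyS u).1⟩
  have hlim := tendsto_atTop_ciSup hmono hbdd
  have hle : ∀ u, ‖y u‖ ≤ ⨆ u, ‖y u‖ := le_ciSup hbdd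
  generalize (⨆ u, ‖y u‖) = M at hlim hle
  -- the minimal norms increase to `M`, and the parallelogram law turns this into a Cauchy net
  have hcauchy : CauchySeq y := by
    refine cauchySeq_of_le_tendsto_0' (fun u => √(2 * (M ^ 2 - ‖y u‖ ^ 2)))
      (fun u u' huu' => ?_) ?_
    · have hM := hle u'
      have := norm_sub_sq_le_of_forall_norm_le (hSv u) (hyS u) (hymin u) (hSanti huu' (hyS u'))
      rw [dist_eq_norm]
      exact (le_abs_self _).trans (Real.abs_le_sqrt (by nlinarith [norm_nonneg (y u')]))
    · have := (((hlim.pow 2).const_sub (M ^ 2)).const_mul 2).sqrt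
      rwa [sub_self, mul_zero, Real.sqrt_zero] at this
  obtain ⟨ylim, hylim⟩ := cauchySeq_tendsto_of_complete hcauchy
  have hmem : ∀ u, ylim ∈ S u := fun u => (hSc u).mem_of_tendsto hylim
    ((eventually_ge_atTop u).mono fun u' h => hSanti h (hyS u'))
  exact ⟨ylim, (hmem ∅).1, Set.mem_iInter.2 fun i => by simpa using (hmem {i}).2⟩

theorem exists_forall_norm_sub_le [CompleteSpace F] (p : ι → E) (q : ι → F)
    (hpq : ∀ i j, ‖q i - q j‖ ≤ ‖p i - p j‖) (x : E) : ∃ y, ∀ i, ‖y - q i‖ ≤ ‖x - p i‖ := by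
  classical
  rcases isEmpty_or_nonempty ι with hι | ⟨⟨i₀⟩⟩
  · exact ⟨0, isEmptyElim⟩
  obtain ⟨y, -, hy⟩ :=
    inter_iInter_nonempty_of_convex (K := fun i => Metric.closedBall (q i) ‖x - p i‖)
    Metric.isBounded_closedBall Metric.isClosed_closedBall (convex_closedBall (q i₀) ‖x - p i₀‖)
    (fun _ => Metric.isClosed_closedBall) (fun _ => convex_closedBall _ _) fun u => by
      obtain ⟨y, hy⟩ :=
        exists_forall_norm_sub_le_of_finset (insert i₀ u) p q (fun i _ j _ => hpq i j) x
      exact ⟨y, by simpa [dist_eq_norm] using hy i₀ (mem_insert_self _ _),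
        Set.mem_iInter₂.2 fun i hi => by simpa [dist_eq_norm] using hy i (mem_insert_of_mem hi)⟩
  exact ⟨y, fun i => by simpa [dist_eq_norm] using Set.mem_iInter.1 hy i⟩

theorem LipschitzOnWith.exists_lipschitzWith_extension [CompleteSpace F] {s : Set E} {f : E → F}
    (hf : LipschitzOnWith 1 f s) : ∃ g : E → F, LipschitzWith 1 g ∧ Set.EqOn f g s := by
  let r : E × F → E × F → Prop := fun a b => ‖a.2 - b.2‖ ≤ ‖a.1 - b.1‖
  have hgraph : ((fun x => (x, f x)) '' s).Pairwise r := by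
    rintro _ ⟨a, ha, rfl⟩ _ ⟨b, hb, rfl⟩ -
    simpa [r] using hf.norm_sub_le ha hb
  obtain ⟨G, hsG, hG⟩ := hgraph.exists_maximal_superset (Set.subset_univ _)
  have hr : ∀ a ∈ G, ∀ b ∈ G, r a b := fun a ha b hb =>
    (eq_or_ne a b).elim (fun h => by simp [r, h]) (hG.prop.2 ha hb)
  have htotal : ∀ x, ∃ y, (x, y) ∈ G := by
    intro x
    obtain ⟨y, hy⟩ := exists_forall_norm_sub_le (fun a : G => a.1.1) (fun a : G => a.1.2)
      (fun a b => hr _ a.2 _ b.2) x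
    refine ⟨y, hG.mem_of_prop_insert ⟨Set.subset_univ _, hG.prop.2.insert fun b hb _ => ?_⟩⟩
    exact ⟨hy ⟨b, hb⟩, by simpa only [r, norm_sub_rev] using hy ⟨b, hb⟩⟩
  choose g hg using htotal
  refine ⟨g, LipschitzWith.of_dist_le_mul fun a b => ?_, fun a ha => ?_⟩
  · simpa [dist_eq_norm] using hr _ (hg a) _ (hg b)
  · simpa [r, sub_eq_zero] using hr _ (hsG ⟨a, ha, rfl⟩) _ (hg a)

end Kirszbraun

theorem exists_lipschitzWith_graph_near {E : Type*} [NormedAddCommGroup E]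
    [InnerProductSpace ℝ E] [CompleteSpace E] (K : Submodule ℝ E) [K.HasOrthogonalProjection]
    {𝒜 : Set E} {δ : ℝ} (hδ : 0 ≤ δ) (hsq : ∀ u ∈ 𝒜, ∀ v ∈ 𝒜,
      ‖Kᗮ.starProjection (u - v)‖ ≤ ‖K.starProjection (u - v)‖ ∨ ‖u - v‖ ≤ δ) :
    ∃ Φ : E → E, LipschitzWith 1 Φ ∧ (∀ p, Φ p ∈ Kᗮ) ∧
      ∀ u ∈ 𝒜, ∃ p ∈ K, ‖u - (p + Φ p)‖ ≤ δ := by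
  set P := K.starProjection
  set Q := Kᗮ.starProjection
  let r : E → E → Prop := fun u v => ‖Q u - Q v‖ ≤ ‖P u - P v‖
  obtain ⟨B, -, hB⟩ := (Set.pairwise_empty r).exists_maximal_superset (Set.empty_subset 𝒜)
  have hBr : ∀ a ∈ B, ∀ b ∈ B, r a b := fun a ha b hb =>
    (eq_or_ne a b).elim (fun h => by simp [r, h]) (hB.prop.2 ha hb)
  have hinj : Set.InjOn P B := fun a ha b hb hab => by
    have hQ : ‖Q a - Q b‖ ≤ ‖P a - P b‖ := hBr a ha b hb
    rw [hab, sub_self, norm_zero, norm_le_zero_iff, sub_eq_zero] at hQ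
    rw [← K.starProjection_add_starProjection_orthogonal a,
      ← K.starProjection_add_starProjection_orthogonal b]
    exact congrArg₂ (· + ·) hab hQ
  have hnear : ∀ u ∈ 𝒜, ∃ v ∈ B, ‖u - v‖ ≤ δ := by
    intro u hu
    by_cases huB : u ∈ B
    · exact ⟨u, huB, by simpa using hδ⟩
    obtain ⟨v, hvB, -, hv⟩ : ∃ v ∈ B, u ≠ v ∧ ¬(r u v ∧ r v u) := by
      by_contra! h
      exact huB (hB.mem_of_prop_insert ⟨Set.insert_subset hu hB.prop.1, hB.prop.2.insert h⟩)
    refine ⟨v, hvB, (hsq u hu v (hB.prop.1 hvB)).resolve_left fun h => hv ?_⟩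
    rw [map_sub, map_sub] at h
    exact ⟨h, by simpa only [r, norm_sub_rev] using h⟩
  let f : E → E := fun p => Q (Function.invFunOn P B p)
  have hf : LipschitzOnWith 1 f (P '' B) := by
    refine LipschitzOnWith.of_dist_le_mul ?_
    rintro _ ⟨a, ha, rfl⟩ _ ⟨b, hb, rfl⟩
    simpa [f, hinj.leftInvOn_invFunOn ha, hinj.leftInvOn_invFunOn hb, dist_eq_norm]
      using hBr a ha b hb
  obtain ⟨F, hF, hfF⟩ := hf.exists_lipschitzWith_extension
  refine ⟨Q ∘ F, by simpa using Kᗮ.lipschitzWith_starProjection.comp hF,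
    fun p => Kᗮ.starProjection_apply_mem (F p), fun u hu => ?_⟩
  obtain ⟨v, hvB, huv⟩ := hnear u hu
  refine ⟨P v, K.starProjection_apply_mem v, ?_⟩
  show ‖u - (P v + Q (F (P v)))‖ ≤ δ
  rw [← hfF ⟨v, hvB, rfl⟩]
  simp only [f]
  rwa [hinj.leftInvOn_invFunOn hvB,
    Kᗮ.starProjection_eq_self_iff.2 (Kᗮ.starProjection_apply_mem v),
    K.starProjection_add_starProjection_orthogonal]

theorem sq_le_mul_exp_of_mul_le_mul_log {lam C x q M : ℝ} (hC : 0 < C) (hx : 0 < x)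
    (hxM : x ≤ M) (hxq : x ≤ √2 * q) (h : lam * q ≤ C * x * Real.log (M ^ 2 / x ^ 2)) :
    x ^ 2 ≤ M ^ 2 * Real.exp (-lam / (√2 * C)) := by
  have hq : 0 < q := by nlinarith [Real.sqrt_nonneg 2]
  have hM : 0 < M := hx.trans_le hxM
  set L := Real.log (M ^ 2 / x ^ 2)
  have hL : 0 ≤ L := Real.log_nonneg ((one_le_div (by positivity)).2 (by gcongr))
  have hlam : lam ≤ √2 * C * L := by
    refine le_of_mul_le_mul_right (h.trans ?_) hq
    nlinarith [mul_nonneg hC.le hL]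
  have hexp : Real.exp (lam / (√2 * C)) ≤ M ^ 2 / x ^ 2 := by
    rw [← Real.exp_log (by positivity : 0 < M ^ 2 / x ^ 2)]
    exact Real.exp_le_exp.2 ((div_le_iff₀ (by positivity)).2 (by linarith))
  rw [le_div_iff₀ (by positivity)] at hexp
  rw [neg_div, Real.exp_neg, ← div_eq_mul_inv, le_div_iff₀ (Real.exp_pos _)]
  linarith

section Diagonal

variable {w : ℕ → H} {l : ℕ → ℝ}

theorem mem_Dom_one_iff {x : H} : x ∈ Dom w l 1 ↔ Memℓp (fun j => l j * ⟪x, w j⟫) 2 := by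
  rw [memℓp_gen_iff (by norm_num)]
  simp only [Dom, Set.mem_ofPred_eq, ENNReal.toReal_ofNat, Real.rpow_two, mul_one,
    Real.norm_eq_abs, sq_abs, mul_pow]

theorem sub_mem_Dom_one {x y : H} (hx : x ∈ Dom w l 1) (hy : y ∈ Dom w l 1) :
    x - y ∈ Dom w l 1 := by
  rw [mem_Dom_one_iff] at *
  simpa only [inner_sub_left, mul_sub, Pi.sub_def] using hx.sub hy

instance (n : ℕ) : FiniteDimensional ℝ (Submodule.span ℝ (w '' ↑(Finset.range n))) :=
  FiniteDimensional.span_of_finite ℝ ((Finset.range n).finite_toSet.image w)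

theorem inner_Pproj (hw : Orthonormal ℝ w) (n j : ℕ) (x : H) :
    ⟪w j, Pproj w n x⟫ = if j < n then ⟪w j, x⟫ else 0 := by
  classical
  simp [Pproj, inner_sum, real_inner_smul_right, orthonormal_iff_ite.mp hw, real_inner_comm]

theorem Pproj_eq_starProjection (hw : Orthonormal ℝ w) (n : ℕ) :
    Pproj w n = (Submodule.span ℝ (w '' ↑(Finset.range n))).starProjection := by
  funext x
  refine (Submodule.eq_starProjection_of_mem_of_inner_eq_zero ?_ fun v hv => ?_).symm
  · exact Submodule.sum_mem _ fun j hj =>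
      Submodule.smul_mem _ _ (Submodule.subset_span (Set.mem_image_of_mem w hj))
  · refine (Submodule.span_le (p := LinearMap.ker (innerₛₗ ℝ (x - Pproj w n x)))).2 ?_ hv
    rintro _ ⟨j, hj, rfl⟩
    simp [real_inner_comm, inner_Pproj hw, Finset.mem_range.1 hj]

theorem mul_norm_sub_Pproj_le_norm_Apow [CompleteSpace H] (b : HilbertBasis ℕ ℝ H)
    (hl : Monotone l) (n : ℕ) {x : H} (hx : x ∈ Dom b l 1) :
    l n * ‖x - Pproj b n x‖ ≤ ‖Apow b l 1 x‖ := by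
  rcases le_or_gt (l n) 0 with hn | hn
  · nlinarith [norm_nonneg (x - Pproj b n x), norm_nonneg (Apow b l 1 x)]
  rw [mem_Dom_one_iff] at hx
  have hA : Apow b l 1 x = b.repr.symm ⟨_, hx⟩ := by
    simp only [Apow, Real.rpow_one]
    exact (b.hasSum_repr_symm ⟨_, hx⟩).tsum_eq
  rw [hA, LinearIsometryEquiv.norm_map, ← Real.norm_of_nonneg hn.le, ← norm_smul,
    ← b.repr.norm_map]
  refine lp.norm_mono two_ne_zero fun j => ?_
  rw [map_smul, lp.coeFn_smul, Pi.smul_apply, b.repr_apply_apply, inner_sub_right,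
    inner_Pproj b.orthonormal]
  split_ifs with hj
  · rw [sub_self, smul_zero, norm_zero]
    exact norm_nonneg _
  · rw [sub_zero, smul_eq_mul, norm_mul, norm_mul, real_inner_comm]
    gcongr
    rw [Real.norm_of_nonneg hn.le, Real.norm_of_nonneg (hn.trans_le (hl (not_lt.1 hj))).le]
    exact hl (not_lt.1 hj)

end Diagonal

theorem norm_starProjection_orthogonal_le_or_sq_le [CompleteSpace H] (b : HilbertBasis ℕ ℝ H)
    {l : ℕ → ℝ} (hl : Monotone l) {𝒜 : Set H} (hsub : 𝒜 ⊆ Dom b l 1) {C M₁ : ℝ} (hC : 0 < C)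
    (hM₁ : ∀ u ∈ 𝒜, 4 * ‖u‖ ≤ M₁)
    (hlog : ∀ u ∈ 𝒜, ∀ v ∈ 𝒜, u ≠ v →
      ‖Apow b l 1 (u - v)‖ ≤ C * ‖u - v‖ * Real.log (M₁ ^ 2 / ‖u - v‖ ^ 2))
    (n : ℕ) {u v : H} (hu : u ∈ 𝒜) (hv : v ∈ 𝒜) :
    ‖(Submodule.span ℝ (b '' ↑(Finset.range n)))ᗮ.starProjection (u - v)‖
        ≤ ‖(Submodule.span ℝ (b '' ↑(Finset.range n))).starProjection (u - v)‖ ∨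
      ‖u - v‖ ^ 2 ≤ M₁ ^ 2 * Real.exp (-(l n) / (√2 * C)) := by
  set U := Submodule.span ℝ (b '' ↑(Finset.range n))
  rw [or_iff_not_imp_left, not_le]
  intro hPQ
  rcases eq_or_ne u v with rfl | huv
  · rw [sub_self, norm_zero, zero_pow two_ne_zero]
    positivity
  have hQ : Uᗮ.starProjection (u - v) = (u - v) - Pproj b n (u - v) := by
    rw [Pproj_eq_starProjection b.orthonormal, U.starProjection_orthogonal']
    rfl
  have hpyth := U.norm_sq_eq_add_norm_sq_starProjection (u - v)
  refine sq_le_mul_exp_of_mul_le_mul_log hC (norm_pos_iff.2 (sub_ne_zero.2 huv)) ?_ ?_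
    ((mul_norm_sub_Pproj_le_norm_Apow b hl n (sub_mem_Dom_one (hsub hu) (hsub hv))).trans
      (hlog u hu v hv huv))
  · linarith [norm_sub_le u v, hM₁ u hu, hM₁ v hv, norm_nonneg u, norm_nonneg v]
  · rw [← hQ]
    refine (pow_le_pow_iff_left₀ (norm_nonneg _) (by positivity) two_ne_zero).1 ?_
    rw [mul_pow, Real.sq_sqrt zero_le_two]
    nlinarith [norm_nonneg (U.starProjection (u - v))]

theorem statement10_general [CompleteSpace H] (w : ℕ → H) (l : ℕ → ℝ)
    (hw : Orthonormal ℝ w)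
    (hspan : ⊤ ≤ (Submodule.span ℝ (Set.range w)).topologicalClosure)
    (hmono : Monotone l)
    (𝒜 : Set H) (hsub : 𝒜 ⊆ Dom w l 1)
    (C M₁ : ℝ) (hC : 0 < C)
    (hM₁ : ∀ u ∈ 𝒜, 4 * ‖u‖ ≤ M₁)  -- `M₁ ≥ 4 sup_{u ∈ 𝒜} ‖u‖`
    (hlog : ∀ u ∈ 𝒜, ∀ v ∈ 𝒜, u ≠ v →
      ‖Apow w l 1 (u - v)‖ ≤ C * ‖u - v‖ * Real.log (M₁ ^ 2 / ‖u - v‖ ^ 2)) :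
    ∀ n : ℕ, ∃ Φn : H → H,
      (∀ p₁ ∈ Set.range (Pproj w n), ∀ p₂ ∈ Set.range (Pproj w n),
        ‖Φn p₁ - Φn p₂‖ ≤ ‖p₁ - p₂‖) ∧
      (∀ p ∈ Set.range (Pproj w n), Pproj w n (Φn p) = 0) ∧
      ∀ u ∈ 𝒜, ∃ p ∈ Set.range (Pproj w n),
        ‖u - (p + Φn p)‖ ^ 2
          ≤ 2 * M₁ ^ 2 * Real.exp (-(l n) / (Real.sqrt 2 * C)) := by
  intro n
  obtain ⟨b, rfl⟩ : ∃ b : HilbertBasis ℕ ℝ H, ⇑b = w := ⟨_, HilbertBasis.coe_mk hw hspan⟩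
  set U := Submodule.span ℝ (b '' ↑(Finset.range n))
  set ε := M₁ ^ 2 * Real.exp (-(l n) / (√2 * C))
  have hP : Pproj b n = U.starProjection := Pproj_eq_starProjection b.orthonormal n
  obtain ⟨Φ, hΦ, hΦU, hnear⟩ := exists_lipschitzWith_graph_near U (Real.sqrt_nonneg ε)
    fun u hu v hv => (norm_starProjection_orthogonal_le_or_sq_le b hmono hsub hC hM₁ hlog n hu
      hv).imp_right Real.le_sqrt_of_sq_le
  refine ⟨Φ, fun p₁ _ p₂ _ => by simpa using hΦ.norm_sub_le p₁ p₂,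
    fun p _ => by rw [hP]; exact U.starProjection_apply_eq_zero_iff.2 (hΦU p), fun u hu => ?_⟩
  obtain ⟨p, hpU, hp⟩ := hnear u hu
  refine ⟨p, hP ▸ ⟨p, U.starProjection_eq_self_iff.2 hpU⟩, ?_⟩
  have hε : 0 ≤ ε := by positivity
  linarith [(Real.le_sqrt (norm_nonneg _) hε).1 hp]

/-- if `A` is `1`-log-Lipschitz on `𝒜 ⊆ D(A)` then for every `n` there is a
`1`-Lipschitz map `Φ_n : P_n H → Q_n H` such that `𝒜` lies within squared distance
`2 M₁² e^{-λ_{n+1}/(√2 C)}` of the graph of `Φ_n` (with `0`-based indexing, `λ_{n+1} = l n`). -/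
theorem statement10 [CompleteSpace H] (w : ℕ → H) (l : ℕ → ℝ)
    (hw : Orthonormal ℝ w)
    (hspan : ⊤ ≤ (Submodule.span ℝ (Set.range w)).topologicalClosure)
    (hmono : Monotone l) (hpos : ∀ j, 0 < l j)
    (hlim : Filter.Tendsto l Filter.atTop Filter.atTop)
    (𝒜 : Set H) (hsub : 𝒜 ⊆ Dom w l 1)
    (htwo : ∃ u ∈ 𝒜, ∃ v ∈ 𝒜, u ≠ v)
    (C M₁ : ℝ) (hC : 0 < C)
    (hM₁ : ∀ u ∈ 𝒜, 4 * ‖u‖ ≤ M₁)  -- `M₁ ≥ 4 sup_{u ∈ 𝒜} ‖u‖`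
    (hlog : ∀ u ∈ 𝒜, ∀ v ∈ 𝒜, u ≠ v →
      ‖Apow w l 1 (u - v)‖ ≤ C * ‖u - v‖ * Real.log (M₁ ^ 2 / ‖u - v‖ ^ 2)) :
    ∀ n : ℕ, ∃ Φn : H → H,
      (∀ p₁ ∈ Set.range (Pproj w n), ∀ p₂ ∈ Set.range (Pproj w n),
        ‖Φn p₁ - Φn p₂‖ ≤ ‖p₁ - p₂‖) ∧
      (∀ p ∈ Set.range (Pproj w n), Pproj w n (Φn p) = 0) ∧
      ∀ u ∈ 𝒜, ∃ p ∈ Set.range (Pproj w n),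
        ‖u - (p + Φn p)‖ ^ 2
          ≤ 2 * M₁ ^ 2 * Real.exp (-(l n) / (Real.sqrt 2 * C)) :=
  statement10_general w l hw hspan hmono 𝒜 hsub C M₁ hC hM₁ hlog

end
end

section
/- In the diagonal setting, let 𝒜 ⊆ ∩_{k≥1} D(A^k) be a set for which there exist constants M' > 0 and τ > 0 such that ‖A^k u‖² ≤ M' (4k)!/(2τ)^{4k} for every u ∈ 𝒜 and every integer k ≥ 1. Then A is 2-log-Lipschitz on 𝒜: there exist constants C > 0 and ε ∈ (0,1) such that for all u,v ∈ 𝒜 with 0 < ‖u − v‖ < ε, ‖A(u − v)‖ ≤ C ‖u − v‖ (log(1/‖u − v‖))². -/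
/-!
Write `r = u - v` and `X = ‖r‖`. Splitting the modes at a level `Λ` gives the interpolation
inequality `‖A r‖² ≤ Λ² X² + Λ^(2-2k) ‖A^k r‖²`, since `λ_j² ≤ Λ²` on low modes and
`λ_j² ≤ λ_j^(2k) / Λ^(2k-2)` on high ones. The Gevrey bound and `(4k)! ≤ (4k)^(4k)` give
`‖A^k r‖ ≤ 2 √M' (2k/τ)^(2k)`. Taking `k = ⌈log (1/X)⌉`, so that `e^k X ≥ 1`, the level
`Λ = e M₀ (2k/τ)²` with `M₀ = max 1 (2√M')` makes the high-mode term at most `Λ² X²`; hence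
`‖A r‖ ≤ √2 Λ X`, and `Λ = O(k²) = O(log² (1/X))`.
-/

open scoped RealInnerProductSpace

noncomputable section

variable {H : Type*} [NormedAddCommGroup H] [InnerProductSpace ℝ H]

namespace Orthonormal

variable {ι : Type*} {w : ι → H}

theorem summable_inner_sq (hw : Orthonormal ℝ w) (r : H) :
    Summable fun j => ⟪r, w j⟫ ^ 2 := by
  simpa [real_inner_comm r] using hw.inner_products_summable r

theorem tsum_inner_sq_le (hw : Orthonormal ℝ w) (r : H) :
    ∑' j, ⟪r, w j⟫ ^ 2 ≤ ‖r‖ ^ 2 := by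
  simpa [real_inner_comm r] using hw.tsum_inner_products_le r

variable [CompleteSpace H] {c : ι → ℝ}

theorem summable_smul (hw : Orthonormal ℝ w) (hc : Summable fun j => c j ^ 2) :
    Summable fun j => c j • w j := by
  simpa using (hw.orthogonalFamily.summable_iff_norm_sq_summable c).2 (by simpa using hc)

theorem norm_tsum_smul_sq (hw : Orthonormal ℝ w) (hc : Summable fun j => c j ^ 2) :
    ‖∑' j, c j • w j‖ ^ 2 = ∑' j, c j ^ 2 := by
  have partial_sums : ∀ s : Finset ι, ‖∑ j ∈ s, c j • w j‖ ^ 2 = ∑ j ∈ s, c j ^ 2 := fun s => by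
    simpa using hw.orthogonalFamily.norm_sum c s
  have h := ((hw.summable_smul hc).hasSum.norm).pow 2
  simp only [partial_sums] at h
  exact tendsto_nhds_unique h hc.hasSum

end Orthonormal

theorem Real.rpow_two_mul_natCast (x : ℝ) (n : ℕ) : x ^ (2 * (n : ℝ)) = x ^ (2 * n) := by
  rw [← Real.rpow_natCast]
  push_cast
  rfl

theorem Real.rpow_mul_sq {x : ℝ} (hx : 0 ≤ x) (α t : ℝ) :
    (x ^ α * t) ^ 2 = x ^ (2 * α) * t ^ 2 := by
  rw [mul_pow, ← Real.rpow_natCast, ← Real.rpow_mul hx, mul_comm α]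
  norm_num

theorem sq_le_sq_add_pow_div {x Λ : ℝ} (hx : 0 ≤ x) (hΛ : 0 < Λ) {k : ℕ} (hk : 1 ≤ k) :
    x ^ 2 ≤ Λ ^ 2 + x ^ (2 * k) / Λ ^ (2 * k - 2) := by
  rcases le_or_gt x Λ with hxΛ | hΛx
  · have := pow_le_pow_left₀ hx hxΛ 2
    have : 0 ≤ x ^ (2 * k) / Λ ^ (2 * k - 2) := by positivity
    linarith
  · have : x ^ 2 ≤ x ^ (2 * k) / Λ ^ (2 * k - 2) := by
      rw [le_div_iff₀ (by positivity)]
      calc x ^ 2 * Λ ^ (2 * k - 2) ≤ x ^ 2 * x ^ (2 * k - 2) := by gcongr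
        _ = x ^ (2 * k) := by rw [← pow_add]; congr 1; omega
    linarith [sq_nonneg Λ]

theorem sqrt_gevrey_le {M' τ : ℝ} (hM' : 0 ≤ M') (hτ : 0 < τ) (k : ℕ) :
    √(M' * (Nat.factorial (4 * k) : ℝ) / (2 * τ) ^ (4 * k)) ≤ √M' * (2 * k / τ) ^ (2 * k) := by
  have hfac : (Nat.factorial (4 * k) : ℝ) ≤ (4 * k : ℝ) ^ (4 * k) := by
    exact_mod_cast Nat.factorial_le_pow (4 * k)
  have hpow : (4 * k : ℝ) ^ (4 * k) / (2 * τ) ^ (4 * k) = ((2 * k / τ) ^ (2 * k)) ^ 2 := by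
    rw [← div_pow, ← pow_mul, show 2 * k * 2 = 4 * k by ring]
    congr 1
    field_simp
    ring
  calc √(M' * (Nat.factorial (4 * k) : ℝ) / (2 * τ) ^ (4 * k))
      ≤ √(M' * ((2 * k / τ) ^ (2 * k)) ^ 2) := by
        rw [← hpow, mul_div_assoc]
        gcongr
    _ = √M' * (2 * k / τ) ^ (2 * k) := by
        rw [Real.sqrt_mul hM', Real.sqrt_sq (by positivity)]

theorem mul_pow_le_pow_mul {M b X : ℝ} (hM : 1 ≤ M) (hb : 0 ≤ b) {k : ℕ} (hk : 1 ≤ k)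
    (hX : Real.exp (-k) ≤ X) :
    M * b ^ k ≤ (Real.exp 1 * M * b) ^ k * X := by
  have hexp : 1 ≤ Real.exp 1 ^ k * X := by
    rw [← Real.exp_nat_mul, mul_one]
    calc (1 : ℝ) = Real.exp k * Real.exp (-k) := by
          rw [← Real.exp_add, add_neg_cancel, Real.exp_zero]
      _ ≤ Real.exp k * X := by gcongr
  calc M * b ^ k ≤ M ^ k * b ^ k := by gcongr; exact le_self_pow₀ hM (by omega)
    _ ≤ (Real.exp 1 ^ k * X) * (M ^ k * b ^ k) := le_mul_of_one_le_left (by positivity) hexp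
    _ = (Real.exp 1 * M * b) ^ k * X := by ring

theorem exists_nat_two_mul_log_ge_and_exp_neg_le {X : ℝ} (hX0 : 0 < X)
    (hX : X < Real.exp (-1)) :
    ∃ k : ℕ, 1 ≤ k ∧ (k : ℝ) ≤ 2 * Real.log (1 / X) ∧ Real.exp (-k) ≤ X := by
  set L := Real.log (1 / X)
  have hlogX : Real.log X = -L := by simp [L]
  have hL : 1 < L := by linarith [(Real.log_lt_iff_lt_exp hX0).2 hX]
  refine ⟨⌈L⌉₊, Nat.one_le_ceil_iff.2 (by linarith), ?_, ?_⟩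
  · linarith [Nat.ceil_lt_add_one (by linarith : 0 ≤ L)]
  · rw [← Real.exp_log hX0, hlogX]
    exact Real.exp_le_exp.2 (neg_le_neg (Nat.le_ceil L))

section DiagonalOperator

variable {w : ℕ → H} {l : ℕ → ℝ}

theorem mem_dom_iff {α : ℝ} {u : H} :
    u ∈ Dom w l α ↔ Summable fun j => l j ^ (2 * α) * ⟪u, w j⟫ ^ 2 :=
  Iff.rfl

theorem sub_mem_dom (hpos : ∀ j, 0 < l j) {α : ℝ} {u v : H}
    (hu : u ∈ Dom w l α) (hv : v ∈ Dom w l α) : u - v ∈ Dom w l α := by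
  have hl : ∀ j, 0 ≤ l j ^ (2 * α) := fun j => Real.rpow_nonneg (hpos j).le _
  refine Summable.of_nonneg_of_le (fun j => mul_nonneg (hl j) (sq_nonneg _)) (fun j => ?_)
    ((hu.mul_left 2).add (hv.mul_left 2))
  rw [inner_sub_left]
  nlinarith [mul_nonneg (hl j) (sq_nonneg (⟪u, w j⟫ + ⟪v, w j⟫))]

theorem summable_apow_coeff_sq (hpos : ∀ j, 0 < l j) {α : ℝ} {u : H} (hu : u ∈ Dom w l α) :
    Summable fun j => (l j ^ α * ⟪u, w j⟫) ^ 2 :=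
  (mem_dom_iff.1 hu).congr fun j => (Real.rpow_mul_sq (hpos j).le _ _).symm

variable [CompleteSpace H]

theorem norm_apow_sq (hw : Orthonormal ℝ w) (hpos : ∀ j, 0 < l j)
    {α : ℝ} {u : H} (hu : u ∈ Dom w l α) :
    ‖Apow w l α u‖ ^ 2 = ∑' j, l j ^ (2 * α) * ⟪u, w j⟫ ^ 2 := by
  rw [Apow, hw.norm_tsum_smul_sq (summable_apow_coeff_sq hpos hu)]
  exact tsum_congr fun j => Real.rpow_mul_sq (hpos j).le α _

theorem apow_sub (hw : Orthonormal ℝ w) (hpos : ∀ j, 0 < l j)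
    {α : ℝ} {u v : H} (hu : u ∈ Dom w l α) (hv : v ∈ Dom w l α) :
    Apow w l α (u - v) = Apow w l α u - Apow w l α v := by
  have hsu := hw.summable_smul (summable_apow_coeff_sq hpos hu)
  have hsv := hw.summable_smul (summable_apow_coeff_sq hpos hv)
  rw [Apow, Apow, Apow, ← (hsu.hasSum.sub hsv.hasSum).tsum_eq]
  exact tsum_congr fun j => by rw [inner_sub_left, mul_sub, sub_smul]

theorem norm_apow_one_sq_le (hw : Orthonormal ℝ w) (hpos : ∀ j, 0 < l j)
    {k : ℕ} (hk : 1 ≤ k) {r : H} (hr1 : r ∈ Dom w l 1) (hrk : r ∈ Dom w l k)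
    {Λ : ℝ} (hΛ : 0 < Λ) :
    ‖Apow w l 1 r‖ ^ 2 ≤ Λ ^ 2 * ‖r‖ ^ 2 + ‖Apow w l k r‖ ^ 2 / Λ ^ (2 * k - 2) := by
  have hsum := hw.summable_inner_sq r
  rw [norm_apow_sq hw hpos hr1, norm_apow_sq hw hpos hrk]
  rw [mem_dom_iff] at hr1 hrk
  simp only [Real.rpow_two_mul_natCast, mul_one, Real.rpow_two] at hr1 hrk ⊢
  calc ∑' j, l j ^ 2 * ⟪r, w j⟫ ^ 2
      ≤ ∑' j, (Λ ^ 2 * ⟪r, w j⟫ ^ 2 + l j ^ (2 * k) * ⟪r, w j⟫ ^ 2 / Λ ^ (2 * k - 2)) := by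
        refine hr1.tsum_le_tsum (fun j => ?_) ((hsum.mul_left _).add (hrk.div_const _))
        rw [mul_div_right_comm, ← add_mul]
        exact mul_le_mul_of_nonneg_right
          (sq_le_sq_add_pow_div (hpos j).le hΛ hk) (sq_nonneg _)
    _ = Λ ^ 2 * ∑' j, ⟪r, w j⟫ ^ 2 + (∑' j, l j ^ (2 * k) * ⟪r, w j⟫ ^ 2) / Λ ^ (2 * k - 2) := by
        rw [(hsum.mul_left _).tsum_add (hrk.div_const _), tsum_mul_left, tsum_div_const]
    _ ≤ _ := by gcongr; exact hw.tsum_inner_sq_le r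

theorem norm_apow_one_le_of_norm_apow_le (hw : Orthonormal ℝ w)
    (hpos : ∀ j, 0 < l j) {k : ℕ} (hk : 1 ≤ k) {r : H} (hr1 : r ∈ Dom w l 1)
    (hrk : r ∈ Dom w l k) {Λ : ℝ} (hΛ : 0 < Λ) (hAk : ‖Apow w l k r‖ ≤ Λ ^ k * ‖r‖) :
    ‖Apow w l 1 r‖ ≤ √2 * (Λ * ‖r‖) := by
  have htail : ‖Apow w l k r‖ ^ 2 / Λ ^ (2 * k - 2) ≤ Λ ^ 2 * ‖r‖ ^ 2 := by
    rw [div_le_iff₀ (by positivity)]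
    calc ‖Apow w l k r‖ ^ 2 ≤ (Λ ^ k * ‖r‖) ^ 2 := by gcongr
      _ = Λ ^ 2 * ‖r‖ ^ 2 * Λ ^ (2 * k - 2) := by
        rw [mul_pow, ← pow_mul, mul_right_comm, mul_comm _ 2, ← pow_add]; congr 2; omega
  rw [← Real.sqrt_sq (by positivity : 0 ≤ Λ * ‖r‖), ← Real.sqrt_mul zero_le_two]
  apply Real.le_sqrt_of_sq_le
  linarith [norm_apow_one_sq_le hw hpos hk hr1 hrk hΛ]

end DiagonalOperator

theorem statement14_general [CompleteSpace H] (w : ℕ → H) (l : ℕ → ℝ)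
    (hw : Orthonormal ℝ w)
    (hpos : ∀ j, 0 < l j)
    (𝒜 : Set H)
    (hsub : ∀ k : ℕ, 1 ≤ k → 𝒜 ⊆ Dom w l (k : ℝ))
    (M' τ : ℝ) (hM' : 0 < M') (hτ : 0 < τ)
    (hGevrey : ∀ u ∈ 𝒜, ∀ k : ℕ, 1 ≤ k →
      ‖Apow w l (k : ℝ) u‖ ^ 2
        ≤ M' * (Nat.factorial (4 * k) : ℝ) / (2 * τ) ^ (4 * k)) :
    ∃ C : ℝ, 0 < C ∧ ∃ ε : ℝ, 0 < ε ∧ ε < 1 ∧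
      ∀ u ∈ 𝒜, ∀ v ∈ 𝒜, 0 < ‖u - v‖ → ‖u - v‖ < ε →
        ‖Apow w l 1 (u - v)‖
          ≤ C * ‖u - v‖ * Real.log (1 / ‖u - v‖) ^ 2 := by
  set M₀ := max 1 (2 * √M')
  refine ⟨16 * √2 * Real.exp 1 * M₀ / τ ^ 2, by positivity, Real.exp (-1), Real.exp_pos _,
    Real.exp_lt_one_iff.2 (by norm_num), fun u hu v hv hX0 hXε => ?_⟩
  set X := ‖u - v‖
  set L := Real.log (1 / X)
  obtain ⟨k, hk, hkL, hXk⟩ := exists_nat_two_mul_log_ge_and_exp_neg_le hX0 hXε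
  have hAk_of_mem : ∀ x ∈ 𝒜, ‖Apow w l k x‖ ≤ √M' * (2 * k / τ) ^ (2 * k) := fun x hx =>
    (Real.le_sqrt_of_sq_le (hGevrey x hx k hk)).trans (sqrt_gevrey_le hM'.le hτ k)
  have hAk : ‖Apow w l k (u - v)‖ ≤ (Real.exp 1 * M₀ * (2 * k / τ) ^ 2) ^ k * X := by
    rw [apow_sub hw hpos (hsub k hk hu) (hsub k hk hv)]
    calc _ ≤ 2 * √M' * (2 * k / τ) ^ (2 * k) := by
          linarith [norm_sub_le (Apow w l k u) (Apow w l k v), hAk_of_mem u hu, hAk_of_mem v hv]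
      _ ≤ M₀ * ((2 * k / τ) ^ 2) ^ k := by rw [← pow_mul]; gcongr; exact le_max_right _ _
      _ ≤ _ := mul_pow_le_pow_mul (le_max_left _ _) (by positivity) hk hXk
  have hdom1 : ∀ x ∈ 𝒜, x ∈ Dom w l 1 := fun x hx => by simpa using hsub 1 le_rfl hx
  calc ‖Apow w l 1 (u - v)‖
      ≤ √2 * (Real.exp 1 * M₀ * (2 * k / τ) ^ 2 * X) :=
        norm_apow_one_le_of_norm_apow_le hw hpos hk (sub_mem_dom hpos (hdom1 u hu) (hdom1 v hv))
          (sub_mem_dom hpos (hsub k hk hu) (hsub k hk hv)) (by positivity) hAk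
    _ ≤ √2 * (Real.exp 1 * M₀ * (2 * (2 * L) / τ) ^ 2 * X) := by gcongr
    _ = 16 * √2 * Real.exp 1 * M₀ / τ ^ 2 * X * L ^ 2 := by ring

/-- if `𝒜 ⊆ ∩_k D(A^k)` satisfies the Gevrey-type bounds
`‖A^k u‖² ≤ M' (4k)!/(2τ)^{4k}` for all `u ∈ 𝒜` and `k ≥ 1`, then `A` is `2`-log-Lipschitz
on `𝒜`: `‖A(u-v)‖ ≤ C ‖u-v‖ (log(1/‖u-v‖))²` whenever `0 < ‖u-v‖ < ε`. -/
theorem statement14 [CompleteSpace H] (w : ℕ → H) (l : ℕ → ℝ)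
    (hw : Orthonormal ℝ w)
    (hspan : ⊤ ≤ (Submodule.span ℝ (Set.range w)).topologicalClosure)
    (hmono : Monotone l) (hpos : ∀ j, 0 < l j)
    (hlim : Filter.Tendsto l Filter.atTop Filter.atTop)
    (𝒜 : Set H)
    (hsub : ∀ k : ℕ, 1 ≤ k → 𝒜 ⊆ Dom w l (k : ℝ))
    (M' τ : ℝ) (hM' : 0 < M') (hτ : 0 < τ)
    (hGevrey : ∀ u ∈ 𝒜, ∀ k : ℕ, 1 ≤ k →
      ‖Apow w l (k : ℝ) u‖ ^ 2
        ≤ M' * (Nat.factorial (4 * k) : ℝ) / (2 * τ) ^ (4 * k)) :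
    ∃ C : ℝ, 0 < C ∧ ∃ ε : ℝ, 0 < ε ∧ ε < 1 ∧
      ∀ u ∈ 𝒜, ∀ v ∈ 𝒜, 0 < ‖u - v‖ → ‖u - v‖ < ε →
        ‖Apow w l 1 (u - v)‖
          ≤ C * ‖u - v‖ * Real.log (1 / ‖u - v‖) ^ 2 :=
  statement14_general w l hw hpos 𝒜 hsub M' τ hM' hτ hGevrey

end
end
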